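/- Let M be a countable transitive model of ZF⁻ and let G be an 𝔽^M-generic filter over M. Then there is a binary relation E on ω with E ∈ M[G] such that the structures (ω,E) and (M,∈) are isomorphic in V. -/

import Mathlib

set_option autoImplicit false

attribute [local instance] Classical.propDecidable

namespace CF

/-- First-order formulas of the language of set theory with `κ` class-predicate
variables (the languages `L^κ`) and `n` free set variables; `κ = 0` gives the
pure ∈-formulas. There is no class quantification. -/
inductive CFml : ℕ → ℕ → Type
  | mem {κ n : ℕ} (i j : Fin n) : CFml κ n
  | eq {κ n : ℕ} (i j : Fin n) : CFml κ n
  | cls {κ n : ℕ} (X : Fin κ) (i : Fin n) : CFml κ n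
  | not {κ n : ℕ} : CFml κ n → CFml κ n
  | or {κ n : ℕ} : CFml κ n → CFml κ n → CFml κ n
  | ex {κ n : ℕ} : CFml κ (n + 1) → CFml κ n

/-- Satisfaction of such a formula in the structure whose domain is the class `D`,
with class predicates interpreted by `Γ` and variable assignment `v`. -/
def SatC (D : Set ZFSet) : ∀ {κ n : ℕ}, (Fin κ → Set ZFSet) → CFml κ n → (Fin n → ZFSet) → Prop
  | _, _, _, .mem i j, v => v i ∈ v j
  | _, _, _, .eq i j, v => v i = v j
  | _, _, Γ, .cls X i, v => v i ∈ Γ X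
  | _, _, Γ, .not φ, v => ¬ SatC D Γ φ v
  | _, _, Γ, .or φ ψ, v => SatC D Γ φ v ∨ SatC D Γ ψ v
  | _, _, Γ, .ex φ, v => ∃ x ∈ D, SatC D Γ φ (Fin.snoc v x)

/-- Pure ∈-formulas with `n` free variables. -/
abbrev Fml (n : ℕ) : Type := CFml 0 n

/-- Satisfaction of an ∈-formula in `(M, ∈)` (quantifiers relativized to `M`). -/
def Sat (M : ZFSet) {n : ℕ} (φ : Fml n) (v : Fin n → ZFSet) : Prop :=
  SatC M.toSet (fun i => i.elim0) φ v

/-- A `k`-ary relation on `M` is definable (with parameters) over `(M, ∈)`. -/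
def DefinableOver (M : ZFSet) {k : ℕ} (S : (Fin k → ZFSet) → Prop) : Prop :=
  ∃ (m : ℕ) (φ : Fml (k + m)) (a : Fin m → ZFSet), (∀ i, a i ∈ M) ∧
    ∀ v : Fin k → ZFSet, (∀ i, v i ∈ M) → (S v ↔ Sat M φ (Fin.append v a))

/-- The collection of classes of `M` that are definable over `(M,∈)` with parameters. -/
def DefClasses (M : ZFSet) : Set (Set ZFSet) :=
  {S | S ⊆ M.toSet ∧ DefinableOver M (fun v : Fin 1 → ZFSet => v 0 ∈ S)}

/-- `M` is a countable transitive model of `ZF⁻` (`ZF` without the power set axiom,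
with Collection instead of Replacement), stated semantically via
the closure conditions that satisfaction of the `ZF⁻`-axioms imposes on a
transitive set (Foundation is automatic for transitive sets). -/
structure IsCTM (M : ZFSet) : Prop where
  countable : M.toSet.Countable
  transitive : M.IsTransitive
  empty_mem : (∅ : ZFSet) ∈ M
  pairing : ∀ x ∈ M, ∀ y ∈ M, ({x, y} : ZFSet) ∈ M
  union : ∀ x ∈ M, (ZFSet.sUnion x : ZFSet) ∈ M
  infinity : ZFSet.omega ∈ M
  separation : ∀ (m : ℕ) (φ : Fml (m + 1)) (a : Fin m → ZFSet), (∀ i, a i ∈ M) →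
    ∀ x ∈ M, ZFSet.sep (fun y => Sat M φ (Fin.snoc a y)) x ∈ M
  collection : ∀ (m : ℕ) (φ : Fml (m + 2)) (a : Fin m → ZFSet), (∀ i, a i ∈ M) →
    ∀ x ∈ M, (∀ y ∈ x, ∃ z ∈ M, Sat M φ (Fin.snoc (Fin.snoc a y) z)) →
      ∃ b ∈ M, ∀ y ∈ x, ∃ z ∈ b, Sat M φ (Fin.snoc (Fin.snoc a y) z)

/-- `x` is a (von Neumann) ordinal. -/
def IsOrdZ (x : ZFSet) : Prop := x.IsTransitive ∧ ∀ y ∈ x, ZFSet.IsTransitive y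

/-- `α` is an ordinal of the model `M`. -/
def IsOrdIn (M α : ZFSet) : Prop := α ∈ M ∧ IsOrdZ α
/-- A notion of (class) forcing for `(M, C)`: a preorder whose domain and order
relation are classes in `C` and whose conditions are elements of `M`, with a
maximal element `one`. For the first-order setting of a partial order definable
over a model `M` of `ZF⁻`, take `C = DefClasses M`. -/
structure ClassForcing (M : ZFSet) (C : Set (Set ZFSet)) where
  P : Set ZFSet
  le : ZFSet → ZFSet → Prop
  P_subM : ∀ p ∈ P, p ∈ M
  P_mem : P ∈ C
  le_mem : {x : ZFSet | ∃ p ∈ P, ∃ q ∈ P, le p q ∧ x = ZFSet.pair p q} ∈ C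
  le_refl : ∀ p ∈ P, le p p
  le_trans : ∀ p ∈ P, ∀ q ∈ P, ∀ r ∈ P, le p q → le q r → le p r
  one : ZFSet
  one_mem : one ∈ P
  le_one : ∀ p ∈ P, le p one

variable {M : ZFSet} {C : Set (Set ZFSet)}

/-- `p` and `q` are compatible in `F`. -/
def Compat (F : ClassForcing M C) (p q : ZFSet) : Prop :=
  ∃ r ∈ F.P, F.le r p ∧ F.le r q

/-- `F` is antisymmetric, i.e. an actual partial order. -/
def Antisymmetric (F : ClassForcing M C) : Prop :=
  ∀ p ∈ F.P, ∀ q ∈ F.P, F.le p q → F.le q p → p = q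

/-- `F` is separative. -/
def Separative (F : ClassForcing M C) : Prop :=
  ∀ p ∈ F.P, ∀ q ∈ F.P, ¬ F.le p q → ∃ r ∈ F.P, F.le r p ∧ ¬ Compat F r q

/-- `σ` is a `P`-name: every element of `σ` is a pair `⟨τ, p⟩` where `τ` is a
`P`-name and `p ∈ P`. -/
inductive IsName (P : Set ZFSet) : ZFSet → Prop
  | intro (σ : ZFSet)
      (hshape : ∀ x ∈ σ, ∃ τ p, p ∈ P ∧ x = ZFSet.pair τ p)
      (hrec : ∀ τ p : ZFSet, ZFSet.pair τ p ∈ σ → IsName P τ) : IsName P σ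

theorem transGen_mem_of_pair_mem {τ p σ : ZFSet} (h : ZFSet.pair τ p ∈ σ) :
    Relation.TransGen (· ∈ ·) τ σ := by
  have h1 : τ ∈ ({τ, p} : ZFSet) := by simp
  have h2 : ({τ, p} : ZFSet) ∈ ZFSet.pair τ p := by simp [ZFSet.pair]
  exact Relation.TransGen.tail (Relation.TransGen.tail (Relation.TransGen.single h1) h2) h

/-- The evaluation `σ^G = {τ^G ∣ ∃ p ∈ G, ⟨τ,p⟩ ∈ σ}` of a name by a filter `G`
(defined by recursion on the transitive closure of `∈`; note that any `τ` with
`⟨τ,p⟩ ∈ σ` satisfies `τ ∈ ⋃₀ ⋃₀ σ`). -/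
noncomputable def val (G : Set ZFSet) : ZFSet → ZFSet :=
  WellFounded.fix (ZFSet.mem_wf.transGen) fun σ ih =>
    @ZFSet.image
      (fun τ => if h : Relation.TransGen (· ∈ ·) τ σ then ih τ h else ∅)
      (Classical.allZFSetDefinable _)
      (ZFSet.sep (fun τ => ∃ p ∈ G, ZFSet.pair τ p ∈ σ) (ZFSet.sUnion (ZFSet.sUnion σ : ZFSet) : ZFSet))

/-- `D` is dense in the forcing `(P, ≤)`. -/
def DenseIn (P : Set ZFSet) (le : ZFSet → ZFSet → Prop) (D : Set ZFSet) : Prop :=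
  ∀ p ∈ P, ∃ q ∈ D, q ∈ P ∧ le q p

/-- `G` is a filter on `(P, ≤)` which is generic over `(M, C)`, i.e. it meets every
dense subclass of `P` lying in `C`. -/
structure IsGenericRaw (M : ZFSet) (C : Set (Set ZFSet)) (P : Set ZFSet)
    (le : ZFSet → ZFSet → Prop) (G : Set ZFSet) : Prop where
  sub : G ⊆ P
  upward : ∀ p ∈ G, ∀ q ∈ P, le p q → q ∈ G
  compat : ∀ p ∈ G, ∀ q ∈ G, ∃ r ∈ G, le r p ∧ le r q
  meets : ∀ D ∈ C, D ⊆ P → DenseIn P le D → (D ∩ G).Nonempty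

/-- `G` is `F`-generic over `(M, C)`. -/
def IsGeneric (F : ClassForcing M C) (G : Set ZFSet) : Prop :=
  IsGenericRaw M C F.P F.le G

/-- The generic extension `M[G] = {σ^G ∣ σ ∈ M^P}` as a class. -/
def MG (M : ZFSet) (P : Set ZFSet) (G : Set ZFSet) : Set ZFSet :=
  {x | ∃ σ, σ ∈ M ∧ IsName P σ ∧ x = val G σ}

/-- `Γ` is a class `P`-name over `(M, C)`. -/
def IsClassName (M : ZFSet) (C : Set (Set ZFSet)) (P : Set ZFSet) (Γ : Set ZFSet) : Prop :=
  Γ ∈ C ∧ ∀ x ∈ Γ, ∃ τ p, τ ∈ M ∧ IsName P τ ∧ p ∈ P ∧ x = ZFSet.pair τ p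

/-- Evaluation `Γ^G` of a class name. -/
def classVal (G : Set ZFSet) (Γ : Set ZFSet) : Set ZFSet :=
  {x | ∃ τ p, p ∈ G ∧ ZFSet.pair τ p ∈ Γ ∧ x = val G τ}

/-- Encoding of a tuple of sets as a single set (iterated Kuratowski pairs). -/
def tupleZF : ∀ {k : ℕ}, (Fin k → ZFSet) → ZFSet
  | 0, _ => ∅
  | _ + 1, v => ZFSet.pair (v 0) (tupleZF (fun i => v i.succ))

/-- `p ⊩ φ(σ⃗)` (with class-name parameters `Γ⃗`): for every `F`-generic filter `G`
over `(M, C)` with `p ∈ G`, `φ(σ⃗^G)` holds in `(M[G], ∈, Γ⃗^G)`. -/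
def Forces (F : ClassForcing M C) {κ n : ℕ} (φ : CFml κ n)
    (Γ : Fin κ → Set ZFSet) (p : ZFSet) (σ : Fin n → ZFSet) : Prop :=
  ∀ G : Set ZFSet, IsGeneric F G → p ∈ G →
    SatC (MG M F.P G) (fun i => classVal G (Γ i)) φ (fun i => val G (σ i))

/-- The definability lemma for `φ` over `(M, C)`: for all class-name parameters,
the class of tuples `⟨p, σ⃗⟩` such that `p ⊩ φ(σ⃗)` is in `C`. -/
def DefLemma (F : ClassForcing M C) {κ n : ℕ} (φ : CFml κ n) : Prop :=
  ∀ Γ : Fin κ → Set ZFSet, (∀ i, IsClassName M C F.P (Γ i)) →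
    {x : ZFSet | ∃ p ∈ F.P, ∃ σ : Fin n → ZFSet,
      (∀ i, σ i ∈ M ∧ IsName F.P (σ i)) ∧ Forces F φ Γ p σ ∧
      x = ZFSet.pair p (tupleZF σ)} ∈ C

/-- The truth lemma for `φ` over `(M, C)`: everything true in a generic extension
is forced by some condition in the generic filter. -/
def TruthLemma (F : ClassForcing M C) {κ n : ℕ} (φ : CFml κ n) : Prop :=
  ∀ Γ : Fin κ → Set ZFSet, (∀ i, IsClassName M C F.P (Γ i)) →
    ∀ σ : Fin n → ZFSet, (∀ i, σ i ∈ M ∧ IsName F.P (σ i)) →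
      ∀ G : Set ZFSet, IsGeneric F G →
        SatC (MG M F.P G) (fun i => classVal G (Γ i)) φ (fun i => val G (σ i)) →
        ∃ p ∈ G, Forces F φ Γ p σ

/-- The forcing theorem for `φ` over `(M, C)`. -/
def ForcingThm (F : ClassForcing M C) {κ n : ℕ} (φ : CFml κ n) : Prop :=
  DefLemma F φ ∧ TruthLemma F φ
/-- `f` is a (set-coded) function: a set of Kuratowski pairs which is functional. -/
def isFuncZ (f : ZFSet) : Prop :=
  (∀ x ∈ f, ∃ a b : ZFSet, x = ZFSet.pair a b) ∧
  ∀ a b b' : ZFSet, ZFSet.pair a b ∈ f → ZFSet.pair a b' ∈ f → b = b'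

/-- `f` is injective (as a set-coded relation). -/
def isInjZ (f : ZFSet) : Prop :=
  ∀ a a' b : ZFSet, ZFSet.pair a b ∈ f → ZFSet.pair a' b ∈ f → a = a'

/-- Domain of a set-coded relation. -/
def domZ (f : ZFSet) : Set ZFSet := {a | ∃ b, ZFSet.pair a b ∈ f}

/-- Range of a set-coded relation. -/
def ranZ (f : ZFSet) : Set ZFSet := {b | ∃ a, ZFSet.pair a b ∈ f}

/-- A set-coded binary relation is acyclic iff its transitive closure is irreflexive. -/
def acyclicZ (e : ZFSet) : Prop :=
  ∀ a : ZFSet, ¬ Relation.TransGen (fun x y => ZFSet.pair x y ∈ e) a a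

/-- The ordered triple `⟨d, e, f⟩`. -/
def tripleZ (d e f : ZFSet) : ZFSet := ZFSet.pair d (ZFSet.pair e f)
/-- `⟨d, e, f⟩` are the data of a condition of the Friedman forcing `𝔽^M`:
`d` is a finite subset of `ω`, `e` is a binary acyclic relation on `d`, `f` is
an injective function with `dom f ∈ {∅, d}` and `ran f ⊆ M`, which respects `∈`
whenever `dom f = d`. -/
structure FCond (M : ZFSet) (d e f : ZFSet) : Prop where
  d_sub : ∀ n ∈ d, n ∈ ZFSet.omega
  d_fin : d.toSet.Finite
  e_sub : ∀ x ∈ e, ∃ a ∈ d, ∃ b ∈ d, x = ZFSet.pair a b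
  e_acyc : acyclicZ e
  f_fun : isFuncZ f
  f_inj : isInjZ f
  f_dom : domZ f = (∅ : Set ZFSet) ∨ domZ f = d.toSet
  f_ran : ∀ b, b ∈ ranZ f → b ∈ M
  f_compat : domZ f = d.toSet →
    ∀ i ∈ d, ∀ j ∈ d, ∀ a b : ZFSet, ZFSet.pair i a ∈ f → ZFSet.pair j b ∈ f →
      (ZFSet.pair i j ∈ e ↔ a ∈ b)

/-- The domain of the Friedman forcing `𝔽^M`. -/
def FriedmanP (M : ZFSet) : Set ZFSet :=
  {x | ∃ d e f, FCond M d e f ∧ x = tripleZ d e f}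

/-- The ordering of the Friedman forcing: `p ≤ q` iff `d_q ⊆ d_p`,
`e_p ∩ (d_q × d_q) = e_q` and `f_q ⊆ f_p`. -/
def FriedmanLe (p q : ZFSet) : Prop :=
  ∃ dp ep fp dq eq' fq : ZFSet, p = tripleZ dp ep fp ∧ q = tripleZ dq eq' fq ∧
    (∀ n ∈ dq, n ∈ dp) ∧
    (∀ x : ZFSet, x ∈ eq' ↔ (x ∈ ep ∧ ∃ a ∈ dq, ∃ b ∈ dq, x = ZFSet.pair a b)) ∧
    (∀ x ∈ fq, x ∈ fp)

/-!
The function parts of the conditions in a generic filter `G` fit together into a bijection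
`h : ω → M`: for `n ∈ ω` and `x ∈ M`, the total conditions with `n` in the domain and `x` in the
range of their function part form a dense class definable over `M`. Density holds because a
condition with empty function part can be completed by realizing its finite acyclic relation by
`∈` inside `M`, after which points can be added one at a time. Compatibility of the conditions in
`G` gives `pCond m n ∈ G ↔ h m ∈ h n` for `pCond m n = ⟨{m, n}, {(m, n)}, ∅⟩`, so
`E = {(m, n) | pCond m n ∈ G}` works. It is the value of the name
`{⟨(m, n)ˇ, pCond m n⟩ | m ≠ n}`, which lies in `M` by Replacement, since check names of natural
numbers are definable over `M` through finite approximations.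
-/

def natZ : ℕ → ZFSet
  | 0 => ∅
  | n + 1 => insert (natZ n) (natZ n)

lemma natZ_mem_omega (n : ℕ) : natZ n ∈ ZFSet.omega := by
  induction n with
  | zero => exact ZFSet.omega_zero
  | succ n ih => exact ZFSet.omega_succ ih

lemma mem_omega_iff {x : ZFSet} : x ∈ ZFSet.omega ↔ ∃ n : ℕ, x = natZ n := by
  have mk_ofNat (n : ℕ) : ZFSet.mk (PSet.ofNat n) = natZ n := by
    induction n with
    | zero => rfl
    | succ n ih => rw [natZ, ← ih]; rfl
  refine ⟨fun h => ?_, fun ⟨n, hn⟩ => hn ▸ natZ_mem_omega n⟩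
  induction x using Quotient.inductionOn with
  | h x =>
    obtain ⟨⟨n⟩, hn⟩ := h
    exact ⟨n, (Quotient.sound hn).trans (mk_ofNat n)⟩

lemma mem_natZ {x : ZFSet} {n : ℕ} : x ∈ natZ n ↔ ∃ m < n, x = natZ m := by
  induction n with
  | zero => simp [natZ]
  | succ n ih =>
    simp only [natZ, ZFSet.mem_insert_iff, ih]
    constructor
    · rintro (rfl | ⟨m, hm, rfl⟩)
      exacts [⟨n, n.lt_succ_self, rfl⟩, ⟨m, by omega, rfl⟩]
    · rintro ⟨m, hm, rfl⟩
      rcases Nat.lt_succ_iff_lt_or_eq.1 hm with h | rfl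
      exacts [Or.inr ⟨m, h, rfl⟩, Or.inl rfl]

lemma natZ_mem_natZ_of_lt {m n : ℕ} (h : m < n) : natZ m ∈ natZ n :=
  mem_natZ.2 ⟨m, h, rfl⟩

lemma natZ_injective : Function.Injective natZ := by
  intro m n h
  by_contra hne
  rcases Nat.lt_or_gt_of_ne hne with hlt | hlt
  · exact ZFSet.mem_irrefl _ (h ▸ natZ_mem_natZ_of_lt hlt)
  · exact ZFSet.mem_irrefl _ (h ▸ natZ_mem_natZ_of_lt hlt)

lemma finite_natZ (n : ℕ) : (natZ n : Set ZFSet).Finite := by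
  induction n with
  | zero => simp [natZ]
  | succ n ih => rw [natZ, ZFSet.coe_insert]; exact ih.insert _

lemma mem_omega_of_mem {k i : ZFSet} (hk : k ∈ ZFSet.omega) (hi : i ∈ k) :
    i ∈ ZFSet.omega := by
  obtain ⟨K, rfl⟩ := mem_omega_iff.1 hk
  obtain ⟨m, -, rfl⟩ := mem_natZ.1 hi
  exact natZ_mem_omega m

lemma mem_trans_of_mem_omega {k i j : ZFSet} (hk : k ∈ ZFSet.omega) (hi : i ∈ k) (hj : j ∈ i) :
    j ∈ k := by
  obtain ⟨K, rfl⟩ := mem_omega_iff.1 hk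
  obtain ⟨a, ha, rfl⟩ := mem_natZ.1 hi
  obtain ⟨b, hb, rfl⟩ := mem_natZ.1 hj
  exact natZ_mem_natZ_of_lt (hb.trans ha)

lemma finite_iff_exists_bound {d : ZFSet} (hd : ∀ i ∈ d, i ∈ ZFSet.omega) :
    (d : Set ZFSet).Finite ↔ ∃ k ∈ ZFSet.omega, ∀ i ∈ d, i ∈ k := by
  constructor
  · intro hfin
    obtain ⟨N, hN⟩ := (hfin.preimage natZ_injective.injOn).bddAbove
    refine ⟨natZ (N + 1), natZ_mem_omega _, fun i hi => ?_⟩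
    obtain ⟨m, rfl⟩ := mem_omega_iff.1 (hd i hi)
    exact natZ_mem_natZ_of_lt (Nat.lt_succ_of_le (hN hi))
  · rintro ⟨k, hk, hdk⟩
    obtain ⟨K, rfl⟩ := mem_omega_iff.1 hk
    exact (finite_natZ K).subset hdk

lemma exists_mem_omega_notMem {d : ZFSet} (hd : (d : Set ZFSet).Finite) :
    ∃ n ∈ ZFSet.omega, n ∉ d := by
  obtain ⟨m, hm⟩ := (hd.preimage natZ_injective.injOn).infinite_compl.nonempty
  exact ⟨natZ m, natZ_mem_omega m, hm⟩

namespace IsCTM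

variable (hM : IsCTM M)
include hM

lemma mem_of_mem {x y : ZFSet} (hx : x ∈ M) (hy : y ∈ x) : y ∈ M :=
  hM.transitive.mem_trans hy hx

lemma singleton_mem {x : ZFSet} (hx : x ∈ M) : ({x} : ZFSet) ∈ M := by
  simpa using hM.pairing x hx x hx

lemma pair_mem {x y : ZFSet} (hx : x ∈ M) (hy : y ∈ M) : ZFSet.pair x y ∈ M :=
  hM.pairing _ (hM.singleton_mem hx) _ (hM.pairing x hx y hy)

lemma insert_mem {x y : ZFSet} (hx : x ∈ M) (hy : y ∈ M) : insert x y ∈ M := by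
  rw [ZFSet.insert_eq]
  simpa using hM.union _ (hM.pairing _ (hM.singleton_mem hx) y hy)

lemma mem_of_finite {x : ZFSet} (hfin : (x : Set ZFSet).Finite) (hxM : x ⊆ M) : x ∈ M := by
  suffices ∀ S : Set ZFSet, S.Finite → ∀ x : ZFSet, (x : Set ZFSet) = S → x ⊆ M → x ∈ M from
    this _ hfin x rfl hxM
  intro S hS
  induction S, hS using Set.Finite.induction_on with
  | empty =>
    intro x hx _
    rw [show x = ∅ from ZFSet.ext fun z => by simp [← SetLike.mem_coe, hx]]
    exact hM.empty_mem
  | @insert a S haS _ ih =>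
    intro x hx hxM
    have hax : a ∈ x := by simp [← SetLike.mem_coe, hx]
    have hrest : ((x.sep (· ≠ a) : ZFSet) : Set ZFSet) = S := by
      ext z
      by_cases hz : z = a
      · simp [hz, haS]
      · have : z ∈ (x : Set ZFSet) ↔ z ∈ S := by rw [hx, Set.mem_insert_iff, or_iff_right hz]
        simpa [hz] using this
    rw [show x = insert a (x.sep (· ≠ a)) from ZFSet.ext fun z => by
      by_cases hz : z = a <;> simp [hz, hax]]
    exact hM.insert_mem (hxM hax) (ih _ hrest fun z hz => hxM (ZFSet.sep_subset hz))

lemma natZ_mem (n : ℕ) : natZ n ∈ M :=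
  hM.mem_of_mem hM.infinity (natZ_mem_omega n)

lemma mem_of_mem_omega {x : ZFSet} (hx : x ∈ ZFSet.omega) : x ∈ M :=
  hM.mem_of_mem hM.infinity hx

lemma infinite : (M : Set ZFSet).Infinite :=
  Set.infinite_of_injective_forall_mem natZ_injective hM.natZ_mem

lemma mem_of_pair_mem {x a b : ZFSet} (hx : x ∈ M) (h : ZFSet.pair a b ∈ x) : a ∈ M ∧ b ∈ M := by
  have hp := hM.mem_of_mem hx h
  have h1 := hM.mem_of_mem hp (by simp [ZFSet.pair] : ({a} : ZFSet) ∈ ZFSet.pair a b)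
  have h2 := hM.mem_of_mem hp (by simp [ZFSet.pair] : ({a, b} : ZFSet) ∈ ZFSet.pair a b)
  exact ⟨hM.mem_of_mem h1 (by simp), hM.mem_of_mem h2 (by simp)⟩

end IsCTM

/-! ### Definability over `M` -/

namespace CFml

def relabel : ∀ {κ m n : ℕ}, (Fin m → Fin n) → CFml κ m → CFml κ n
  | _, _, _, ρ, .mem i j => .mem (ρ i) (ρ j)
  | _, _, _, ρ, .eq i j => .eq (ρ i) (ρ j)
  | _, _, _, ρ, .cls X i => .cls X (ρ i)
  | _, _, _, ρ, .not φ => .not (relabel ρ φ)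
  | _, _, _, ρ, .or φ ψ => .or (relabel ρ φ) (relabel ρ ψ)
  | _, _, _, ρ, .ex φ => .ex (relabel (Fin.snoc (Fin.castSucc ∘ ρ) (Fin.last _)) φ)

lemma satC_relabel {D : Set ZFSet} : ∀ {κ m n : ℕ} (Γ : Fin κ → Set ZFSet)
    (ρ : Fin m → Fin n) (φ : CFml κ m) (v : Fin n → ZFSet),
    SatC D Γ (relabel ρ φ) v ↔ SatC D Γ φ (v ∘ ρ)
  | _, _, _, _, _, .mem i j, v => by simp [relabel, SatC]
  | _, _, _, _, _, .eq i j, v => by simp [relabel, SatC]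
  | _, _, _, _, _, .cls X i, v => by simp [relabel, SatC]
  | _, _, _, Γ, ρ, .not φ, v => by simpa [relabel, SatC] using (satC_relabel Γ ρ φ v).not
  | _, _, _, Γ, ρ, .or φ ψ, v => by
      simpa [relabel, SatC] using or_congr (satC_relabel Γ ρ φ v) (satC_relabel Γ ρ ψ v)
  | _, _, _, Γ, ρ, .ex φ, v => by
      simp only [relabel, SatC]
      refine exists_congr fun x => and_congr_right fun _ => ?_
      rw [satC_relabel, Fin.comp_snoc, ← Function.comp_assoc, Fin.snoc_comp_castSucc,
        Fin.snoc_last]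

end CFml

/-- `P` is definable over `(M, ∈)` by an `∈`-formula without parameters; parameters are
handled by reserving variables for them. -/
def IsDefinable (M : ZFSet) {n : ℕ} (P : (Fin n → ZFSet) → Prop) : Prop :=
  ∃ φ : Fml n, ∀ v : Fin n → ZFSet, (∀ i, v i ∈ M) → (P v ↔ Sat M φ v)

lemma snoc_mem {n : ℕ} {v : Fin n → ZFSet} {x : ZFSet} (hv : ∀ i, v i ∈ M) (hx : x ∈ M) :
    ∀ i, (Fin.snoc v x : Fin (n + 1) → ZFSet) i ∈ M :=
  Fin.lastCases (by simpa using hx) fun j => by simpa using hv j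

namespace IsDefinable

variable {n : ℕ} {P Q : (Fin n → ZFSet) → Prop}

lemma congr (h : IsDefinable M P) (hPQ : ∀ v, (∀ i, v i ∈ M) → (P v ↔ Q v)) :
    IsDefinable M Q := by
  obtain ⟨φ, hφ⟩ := h
  exact ⟨φ, fun v hv => (hPQ v hv).symm.trans (hφ v hv)⟩

lemma mem (i j : Fin n) : IsDefinable M fun v => v i ∈ v j :=
  ⟨.mem i j, fun _ _ => by simp [Sat, SatC]⟩

lemma eq (i j : Fin n) : IsDefinable M fun v => v i = v j :=
  ⟨.eq i j, fun _ _ => by simp [Sat, SatC]⟩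

lemma not (h : IsDefinable M P) : IsDefinable M fun v => ¬ P v := by
  obtain ⟨φ, hφ⟩ := h
  exact ⟨.not φ, fun v hv => by simpa [Sat, SatC] using (hφ v hv).not⟩

lemma or (hP : IsDefinable M P) (hQ : IsDefinable M Q) : IsDefinable M fun v => P v ∨ Q v := by
  obtain ⟨φ, hφ⟩ := hP
  obtain ⟨ψ, hψ⟩ := hQ
  exact ⟨.or φ ψ, fun v hv => by simpa [Sat, SatC] using or_congr (hφ v hv) (hψ v hv)⟩

lemma and (hP : IsDefinable M P) (hQ : IsDefinable M Q) : IsDefinable M fun v => P v ∧ Q v :=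
  (hP.not.or hQ.not).not.congr fun _ _ => not_or.trans (by simp only [not_not])

lemma imp (hP : IsDefinable M P) (hQ : IsDefinable M Q) : IsDefinable M fun v => P v → Q v :=
  (hP.not.or hQ).congr fun _ _ => imp_iff_not_or.symm

lemma iff (hP : IsDefinable M P) (hQ : IsDefinable M Q) : IsDefinable M fun v => (P v ↔ Q v) :=
  ((hP.imp hQ).and (hQ.imp hP)).congr fun _ _ => iff_iff_implies_and_implies.symm

lemma comp {m : ℕ} (ρ : Fin m → Fin n) {P : (Fin m → ZFSet) → Prop} (h : IsDefinable M P) :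
    IsDefinable M fun v => P (v ∘ ρ) := by
  obtain ⟨φ, hφ⟩ := h
  exact ⟨φ.relabel ρ, fun v hv => (hφ _ fun i => hv (ρ i)).trans
    (CFml.satC_relabel _ ρ φ v).symm⟩

/-- The quantifier rule, stated so that the body `P v x` is found by higher-order unification. -/
lemma exists_mem {P : (Fin n → ZFSet) → ZFSet → Prop}
    (h : IsDefinable M fun w : Fin (n + 1) → ZFSet => P (Fin.init w) (w (Fin.last n))) :
    IsDefinable M fun v => ∃ x ∈ M, P v x := by
  obtain ⟨φ, hφ⟩ := h
  refine ⟨.ex φ, fun v hv => ?_⟩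
  simp only [Sat, SatC]
  refine exists_congr fun x => ⟨fun ⟨hx, hP⟩ => ⟨hx, ?_⟩, fun ⟨hx, hS⟩ => ⟨hx, ?_⟩⟩
  · exact (hφ _ (snoc_mem hv hx)).1 (by simpa using hP)
  · simpa using (hφ _ (snoc_mem hv hx)).2 hS

lemma forall_mem {P : (Fin n → ZFSet) → ZFSet → Prop}
    (h : IsDefinable M fun w : Fin (n + 1) → ZFSet => P (Fin.init w) (w (Fin.last n))) :
    IsDefinable M fun v => ∀ x ∈ M, P v x :=
  (exists_mem (P := fun v x => ¬ P v x) h.not).not.congr fun _ _ => by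
    simp only [not_exists, not_and, not_not]

lemma exists_mem_var (hM : IsCTM M) (k : Fin n) {P : (Fin n → ZFSet) → ZFSet → Prop}
    (h : IsDefinable M fun w : Fin (n + 1) → ZFSet => P (Fin.init w) (w (Fin.last n))) :
    IsDefinable M fun v => ∃ x ∈ v k, P v x :=
  (exists_mem (P := fun v x => x ∈ v k ∧ P v x) ((mem _ _).and h)).congr fun _ hv =>
    ⟨fun ⟨x, _, hxk, hP⟩ => ⟨x, hxk, hP⟩,
      fun ⟨x, hxk, hP⟩ => ⟨x, hM.mem_of_mem (hv k) hxk, hxk, hP⟩⟩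

lemma forall_mem_var (hM : IsCTM M) (k : Fin n) {P : (Fin n → ZFSet) → ZFSet → Prop}
    (h : IsDefinable M fun w : Fin (n + 1) → ZFSet => P (Fin.init w) (w (Fin.last n))) :
    IsDefinable M fun v => ∀ x ∈ v k, P v x :=
  (forall_mem (P := fun v x => x ∈ v k → P v x) ((mem _ _).imp h)).congr fun _ hv =>
    ⟨fun h x hxk => h x (hM.mem_of_mem (hv k) hxk) hxk, fun h x _ => h x⟩

end IsDefinable

structure IsDefinableTerm (M : ZFSet) {n : ℕ} (t : (Fin n → ZFSet) → ZFSet) : Prop where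
  apply_mem : ∀ v, (∀ i, v i ∈ M) → t v ∈ M
  graph : IsDefinable M fun w : Fin (n + 1) → ZFSet => w (Fin.last n) = t (Fin.init w)

lemma IsDefinable.subst {n : ℕ} {P : (Fin (n + 1) → ZFSet) → Prop}
    {t : (Fin n → ZFSet) → ZFSet} (hP : IsDefinable M P) (ht : IsDefinableTerm M t) :
    IsDefinable M fun v => P (Fin.snoc v (t v)) :=
  (IsDefinable.exists_mem (P := fun v x => x = t v ∧ P (Fin.snoc v x))
    (ht.graph.and (hP.congr fun w _ => by rw [Fin.snoc_init_self]))).congr fun v hv =>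
    ⟨fun ⟨_, _, hx, hP⟩ => hx ▸ hP, fun h => ⟨t v, ht.apply_mem v hv, rfl, h⟩⟩

lemma isDefinable_eq_doubleton (hM : IsCTM M) {n : ℕ} (i j k : Fin n) :
    IsDefinable M fun v => v k = {v i, v j} :=
  (IsDefinable.forall_mem (P := fun v z => z ∈ v k ↔ z = v i ∨ z = v j)
    ((IsDefinable.mem _ _).iff ((IsDefinable.eq _ _).or (IsDefinable.eq _ _)))).congr
    fun v hv => ⟨fun h => ZFSet.ext fun z => ⟨fun hz => by
      simpa using (h z (hM.mem_of_mem (hv k) hz)).1 hz, fun hz => by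
      rcases ZFSet.mem_pair.1 hz with rfl | rfl
      exacts [(h _ (hv i)).2 (Or.inl rfl), (h _ (hv j)).2 (Or.inr rfl)]⟩,
      fun h z _ => by rw [h, ZFSet.mem_pair]⟩

lemma isDefinable_eq_empty (hM : IsCTM M) {n : ℕ} (k : Fin n) :
    IsDefinable M fun v => v k = ∅ :=
  (IsDefinable.forall_mem (P := fun v z => z ∉ v k) (IsDefinable.mem _ _).not).congr
    fun v hv => ⟨fun h => (ZFSet.eq_empty _).2 fun z hz => h z (hM.mem_of_mem (hv k) hz) hz,
      fun h z _ => by simp [h]⟩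

namespace IsDefinableTerm

variable {n : ℕ} {s t : (Fin n → ZFSet) → ZFSet}

lemma var (i : Fin n) : IsDefinableTerm M fun v => v i :=
  ⟨fun _ hv => hv i, IsDefinable.eq _ _⟩

lemma weaken (ht : IsDefinableTerm M t) :
    IsDefinableTerm M fun w : Fin (n + 1) → ZFSet => t (Fin.init w) where
  apply_mem w hw := ht.apply_mem _ fun _ => hw _
  graph := (ht.graph.comp (Fin.snoc (fun i => i.castSucc.castSucc) (Fin.last (n + 1)))).congr
    fun u _ => by simp only [Fin.comp_snoc, Fin.init_snoc, Fin.snoc_last]; rfl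

lemma eq (hs : IsDefinableTerm M s) (ht : IsDefinableTerm M t) :
    IsDefinable M fun v => s v = t v :=
  (ht.graph.subst hs).congr fun _ _ => by simp only [Fin.snoc_last, Fin.init_snoc]

lemma mem (hs : IsDefinableTerm M s) (ht : IsDefinableTerm M t) :
    IsDefinable M fun v => s v ∈ t v :=
  (((IsDefinable.mem (Fin.last n).castSucc (Fin.last (n + 1))).subst ht.weaken).subst hs).congr
    fun _ _ => by simp only [Fin.snoc_last, Fin.snoc_castSucc, Fin.init_snoc]

lemma empty (hM : IsCTM M) : IsDefinableTerm M fun (_ : Fin n → ZFSet) => ∅ :=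
  ⟨fun _ _ => hM.empty_mem, isDefinable_eq_empty hM _⟩

lemma doubleton (hM : IsCTM M) (hs : IsDefinableTerm M s) (ht : IsDefinableTerm M t) :
    IsDefinableTerm M fun v => {s v, t v} where
  apply_mem v hv := hM.pairing _ (hs.apply_mem v hv) _ (ht.apply_mem v hv)
  graph := (((isDefinable_eq_doubleton hM (Fin.last (n + 1)).castSucc (Fin.last (n + 2))
    (Fin.last n).castSucc.castSucc).subst ht.weaken.weaken).subst hs.weaken).congr
    fun _ _ => by simp only [Fin.snoc_last, Fin.snoc_castSucc, Fin.init_snoc]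

lemma singleton (hM : IsCTM M) (hs : IsDefinableTerm M s) :
    IsDefinableTerm M fun v => {s v} := by
  simpa only [ZFSet.pair_eq_singleton] using hs.doubleton hM hs

lemma pair (hM : IsCTM M) (hs : IsDefinableTerm M s) (ht : IsDefinableTerm M t) :
    IsDefinableTerm M fun v => ZFSet.pair (s v) (t v) :=
  (hs.singleton hM).doubleton hM (hs.doubleton hM ht)

lemma triple (hM : IsCTM M) {r : (Fin n → ZFSet) → ZFSet} (hr : IsDefinableTerm M r)
    (hs : IsDefinableTerm M s) (ht : IsDefinableTerm M t) :
    IsDefinableTerm M fun v => tripleZ (r v) (s v) (t v) :=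
  hr.pair hM (hs.pair hM ht)

end IsDefinableTerm

attribute [local instance] Classical.allZFSetDefinable

namespace IsCTM

variable (hM : IsCTM M)
include hM

lemma sep_mem {m : ℕ} {P : (Fin (m + 1) → ZFSet) → Prop} (hP : IsDefinable M P)
    {a : Fin m → ZFSet} (ha : ∀ i, a i ∈ M) {x : ZFSet} (hx : x ∈ M) :
    x.sep (fun y => P (Fin.snoc a y)) ∈ M := by
  obtain ⟨φ, hφ⟩ := hP
  convert hM.separation m φ a ha x hx using 1
  ext y
  simp only [ZFSet.mem_sep]
  exact and_congr_right fun hy => hφ _ (snoc_mem ha (hM.mem_of_mem hx hy))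

/-- Replacement, from Collection followed by Separation. -/
lemma image_mem {m : ℕ} {P : (Fin (m + 2) → ZFSet) → Prop} (hP : IsDefinable M P)
    {a : Fin m → ZFSet} (ha : ∀ i, a i ∈ M) {x : ZFSet} (hx : x ∈ M) {F : ZFSet → ZFSet}
    [ZFSet.Definable₁ F] (hF : ∀ y ∈ x, F y ∈ M)
    (hPF : ∀ y ∈ x, ∀ z ∈ M, P (Fin.snoc (Fin.snoc a y) z) ↔ z = F y) :
    ZFSet.image F x ∈ M := by
  have hya : ∀ y ∈ x, ∀ i, (Fin.snoc a y : Fin (m + 1) → ZFSet) i ∈ M :=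
    fun y hy => snoc_mem ha (hM.mem_of_mem hx hy)
  obtain ⟨φ, hφ⟩ := id hP
  obtain ⟨b, hbM, hb⟩ := hM.collection m φ a ha x hx fun y hy =>
    ⟨F y, hF y hy, (hφ _ (snoc_mem (hya y hy) (hF y hy))).1 ((hPF y hy _ (hF y hy)).2 rfl)⟩
  have hFb : ∀ y ∈ x, F y ∈ b := fun y hy => by
    obtain ⟨z, hzb, hz⟩ := hb y hy
    have hzM := hM.mem_of_mem hbM hzb
    rwa [← (hPF y hy z hzM).1 ((hφ _ (snoc_mem (hya y hy) hzM)).2 hz)]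
  have hQ : IsDefinable M fun u : Fin (m + 2) → ZFSet =>
      ∃ y ∈ u (Fin.last m).castSucc,
        P (Fin.snoc (Fin.snoc (Fin.init (Fin.init u)) y) (u (Fin.last (m + 1)))) :=
    .exists_mem_var hM _ <| (hP.comp (Fin.snoc (Fin.snoc (fun i => i.castSucc.castSucc.castSucc)
      (Fin.last (m + 2))) (Fin.last (m + 1)).castSucc)).congr fun w _ => by
      simp only [Fin.comp_snoc]; rfl
  convert hM.sep_mem hQ (snoc_mem ha hx) hbM using 1
  ext z
  simp only [ZFSet.mem_image, ZFSet.mem_sep, Fin.init_snoc, Fin.snoc_last, Fin.snoc_castSucc]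
  constructor
  · rintro ⟨y, hy, rfl⟩
    exact ⟨hFb y hy, y, hy, (hPF y hy _ (hF y hy)).2 rfl⟩
  · rintro ⟨hzb, y, hy, hP⟩
    exact ⟨y, hy, ((hPF y hy z (hM.mem_of_mem hbM hzb)).1 hP).symm⟩

end IsCTM

lemma mem_defClasses {D : Set ZFSet} (hDM : D ⊆ M) {m : ℕ} {P : (Fin (m + 1) → ZFSet) → Prop}
    (hP : IsDefinable M P) {a : Fin m → ZFSet} (ha : ∀ i, a i ∈ M)
    (hD : ∀ p ∈ M, p ∈ D ↔ P (Fin.snoc a p)) : D ∈ DefClasses M := by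
  obtain ⟨φ, hφ⟩ := hP.comp (Fin.snoc (Fin.natAdd 1) (Fin.castAdd m 0))
  refine ⟨hDM, m, φ, a, ha, fun v hv => ?_⟩
  have hva : ∀ i, Fin.append v a i ∈ M := Fin.addCases (by simpa using hv) (by simpa using ha)
  have hperm : Fin.append v a ∘ Fin.snoc (Fin.natAdd 1) (Fin.castAdd m 0) = Fin.snoc a (v 0) := by
    rw [Fin.comp_snoc, Fin.append_left]
    congr 1
    funext i
    exact Fin.append_right v a i
  refine (hD _ (hv 0)).trans ?_
  rw [← hperm]
  exact hφ _ hva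

/-! ### Friedman conditions -/

lemma tripleZ_inj {d e f d' e' f' : ZFSet} :
    tripleZ d e f = tripleZ d' e' f' ↔ d = d' ∧ e = e' ∧ f = f' := by
  simp [tripleZ, ZFSet.pair_inj]

lemma friedmanLe_tripleZ_iff {d e f d' e' f' : ZFSet} :
    FriedmanLe (tripleZ d e f) (tripleZ d' e' f') ↔ d' ⊆ d ∧
      (∀ z, z ∈ e' ↔ z ∈ e ∧ ∃ a ∈ d', ∃ b ∈ d', z = ZFSet.pair a b) ∧ f' ⊆ f := by
  constructor
  · rintro ⟨_, _, _, _, _, _, h₁, h₂, hd, he, hf⟩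
    obtain ⟨rfl, rfl, rfl⟩ := tripleZ_inj.1 h₁
    obtain ⟨rfl, rfl, rfl⟩ := tripleZ_inj.1 h₂
    exact ⟨hd, he, hf⟩
  · rintro ⟨hd, he, hf⟩
    exact ⟨_, _, _, _, _, _, rfl, rfl, hd, he, hf⟩

lemma friedmanLe_trans {p q r : ZFSet} (hpq : FriedmanLe p q) (hqr : FriedmanLe q r) :
    FriedmanLe p r := by
  obtain ⟨dp, ep, fp, dq, eq, fq, rfl, rfl, hd₁, he₁, hf₁⟩ := hpq
  obtain ⟨dq', eq', fq', dr, er, fr, hq, rfl, hd₂, he₂, hf₂⟩ := hqr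
  obtain ⟨rfl, rfl, rfl⟩ := tripleZ_inj.1 hq
  refine ⟨_, _, _, _, _, _, rfl, rfl, fun n hn => hd₁ n (hd₂ n hn), fun z => ?_,
    fun z hz => hf₁ z (hf₂ z hz)⟩
  rw [he₂, he₁]
  constructor
  · rintro ⟨⟨hz, -⟩, hzr⟩
    exact ⟨hz, hzr⟩
  · rintro ⟨hz, a, ha, b, hb, rfl⟩
    exact ⟨⟨hz, a, hd₂ a ha, b, hd₂ b hb, rfl⟩, a, ha, b, hb, rfl⟩

lemma acyclicZ_of_forall_mem {e : ZFSet} (g : ZFSet → ZFSet)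
    (h : ∀ a b, ZFSet.pair a b ∈ e → g a ∈ g b) : acyclicZ e := fun a ha =>
  ZFSet.mem_wf.transGen.irrefl.irrefl _ (Relation.TransGen.lift g h a a ha)

section FCond

variable {d e f : ZFSet} (hc : FCond M d e f)
include hc

lemma FCond.mem_of_pair_mem_f {i a : ZFSet} (h : ZFSet.pair i a ∈ f) : i ∈ d := by
  have hi : i ∈ domZ f := ⟨a, h⟩
  rcases hc.f_dom with hdom | hdom <;> rw [hdom] at hi
  exacts [hi.elim, hi]

lemma FCond.domZ_eq_of_pair_mem {i a : ZFSet} (h : ZFSet.pair i a ∈ f) : domZ f = d := by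
  refine hc.f_dom.resolve_left fun hdom => ?_
  have hi : i ∈ domZ f := ⟨a, h⟩
  rw [hdom] at hi
  exact hi

/-- Once `f` is nonempty it is total, so `e` is read off from `∈` on the values of `f`. -/
lemma FCond.edge_iff {i j a b : ZFSet} (ha : ZFSet.pair i a ∈ f) (hb : ZFSet.pair j b ∈ f) :
    ZFSet.pair i j ∈ e ↔ a ∈ b :=
  hc.f_compat (hc.domZ_eq_of_pair_mem ha) i (hc.mem_of_pair_mem_f ha) j
    (hc.mem_of_pair_mem_f hb) a b ha hb

lemma FCond.mem_d_of_pair_mem_e {i j : ZFSet} (h : ZFSet.pair i j ∈ e) : i ∈ d ∧ j ∈ d := by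
  obtain ⟨a, ha, b, hb, hab⟩ := hc.e_sub _ h
  obtain ⟨rfl, rfl⟩ := ZFSet.pair_injective hab
  exact ⟨ha, hb⟩

lemma FCond.wellFounded : WellFounded fun a b => ZFSet.pair a b ∈ e := by
  let r := Relation.TransGen fun a b => ZFSet.pair a b ∈ e
  have : IsStrictOrder ZFSet r := { irrefl := hc.e_acyc, trans := fun _ _ _ => .trans }
  have hwf := Set.wellFoundedOn_iff.1 (hc.d_fin.wellFoundedOn (r := r))
  exact Subrelation.wf (fun {a b} h => ⟨.single h, (hc.mem_d_of_pair_mem_e h).1,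
    (hc.mem_d_of_pair_mem_e h).2⟩) hwf

end FCond

noncomputable def edgesZ (d : ZFSet) (g : ZFSet → ZFSet) : ZFSet :=
  (d.prod d).sep fun z => ∃ i j, z = ZFSet.pair i j ∧ g i ∈ g j

noncomputable def graphZ (d : ZFSet) (g : ZFSet → ZFSet) : ZFSet :=
  ZFSet.image (fun i => ZFSet.pair i (g i)) d

noncomputable def graphCond (d : ZFSet) (g : ZFSet → ZFSet) : ZFSet :=
  tripleZ d (edgesZ d g) (graphZ d g)

lemma mem_edgesZ {d z : ZFSet} {g : ZFSet → ZFSet} :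
    z ∈ edgesZ d g ↔ ∃ i ∈ d, ∃ j ∈ d, z = ZFSet.pair i j ∧ g i ∈ g j := by
  simp only [edgesZ, ZFSet.mem_sep, ZFSet.mem_prod]
  constructor
  · rintro ⟨⟨i, hi, j, hj, rfl⟩, i', j', h, hg⟩
    obtain ⟨rfl, rfl⟩ := ZFSet.pair_injective h
    exact ⟨i, hi, j, hj, rfl, hg⟩
  · rintro ⟨i, hi, j, hj, rfl, hg⟩
    exact ⟨⟨i, hi, j, hj, rfl⟩, i, j, rfl, hg⟩

lemma pair_mem_edgesZ {d i j : ZFSet} {g : ZFSet → ZFSet} :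
    ZFSet.pair i j ∈ edgesZ d g ↔ i ∈ d ∧ j ∈ d ∧ g i ∈ g j := by
  rw [mem_edgesZ]
  constructor
  · rintro ⟨i', hi, j', hj, h, hg⟩
    obtain ⟨rfl, rfl⟩ := ZFSet.pair_injective h
    exact ⟨hi, hj, hg⟩
  · rintro ⟨hi, hj, hg⟩
    exact ⟨i, hi, j, hj, rfl, hg⟩

lemma mem_graphZ {d z : ZFSet} {g : ZFSet → ZFSet} :
    z ∈ graphZ d g ↔ ∃ i ∈ d, z = ZFSet.pair i (g i) := by
  simp [graphZ, eq_comm]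

lemma pair_mem_graphZ {d i a : ZFSet} {g : ZFSet → ZFSet} :
    ZFSet.pair i a ∈ graphZ d g ↔ i ∈ d ∧ a = g i := by
  simp [graphZ, ZFSet.pair_inj, and_comm, eq_comm]

/-- The data of the total Friedman condition `graphCond d g`. -/
structure IsGraphData (M d : ZFSet) (g : ZFSet → ZFSet) : Prop where
  sub_omega : ∀ i ∈ d, i ∈ ZFSet.omega
  finite : (d : Set ZFSet).Finite
  injOn : Set.InjOn g d
  mem : ∀ i ∈ d, g i ∈ M

namespace IsGraphData

variable {d : ZFSet} {g : ZFSet → ZFSet} (h : IsGraphData M d g)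
include h

lemma fcond : FCond M d (edgesZ d g) (graphZ d g) where
  d_sub := h.sub_omega
  d_fin := h.finite
  e_sub z hz := by
    obtain ⟨i, hi, j, hj, rfl, -⟩ := mem_edgesZ.1 hz
    exact ⟨i, hi, j, hj, rfl⟩
  e_acyc := acyclicZ_of_forall_mem g fun _ _ hab => (pair_mem_edgesZ.1 hab).2.2
  f_fun := ⟨fun z hz => by
      obtain ⟨i, -, rfl⟩ := mem_graphZ.1 hz
      exact ⟨i, g i, rfl⟩,
    fun _ _ _ hb hb' => (pair_mem_graphZ.1 hb).2.trans (pair_mem_graphZ.1 hb').2.symm⟩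
  f_inj _ _ _ ha ha' := by
    obtain ⟨hi, rfl⟩ := pair_mem_graphZ.1 ha
    obtain ⟨hi', hg⟩ := pair_mem_graphZ.1 ha'
    exact h.injOn hi hi' hg
  f_dom := Or.inr <| Set.ext fun i => ⟨fun ⟨_, hi⟩ => (pair_mem_graphZ.1 hi).1,
    fun hi => ⟨g i, pair_mem_graphZ.2 ⟨hi, rfl⟩⟩⟩
  f_ran b := fun ⟨_, hb⟩ => by
    obtain ⟨hi, rfl⟩ := pair_mem_graphZ.1 hb
    exact h.mem _ hi
  f_compat _ i hi j hj a b ha hb := by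
    rw [(pair_mem_graphZ.1 ha).2, (pair_mem_graphZ.1 hb).2, pair_mem_edgesZ]
    exact ⟨fun h => h.2.2, fun h => ⟨hi, hj, h⟩⟩

lemma graphCond_mem_friedmanP : graphCond d g ∈ FriedmanP M :=
  ⟨_, _, _, h.fcond, rfl⟩

end IsGraphData

lemma graphCond_le_tripleZ {d e f : ZFSet} {g : ZFSet → ZFSet}
    (he : ∀ z ∈ e, ∃ i ∈ d, ∃ j ∈ d, z = ZFSet.pair i j)
    (hdeg : ∀ i ∈ d, ∀ j ∈ d, ZFSet.pair i j ∈ e ↔ g i ∈ g j)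
    (hf : ∀ z ∈ f, ∃ i ∈ d, z = ZFSet.pair i (g i)) :
    FriedmanLe (graphCond d g) (tripleZ d e f) := by
  refine friedmanLe_tripleZ_iff.2 ⟨subset_rfl, fun z => ⟨fun hz => ?_, ?_⟩, fun z hz => ?_⟩
  · obtain ⟨i, hi, j, hj, rfl⟩ := he z hz
    exact ⟨pair_mem_edgesZ.2 ⟨hi, hj, (hdeg i hi j hj).1 hz⟩, i, hi, j, hj, rfl⟩
  · rintro ⟨hz, i, hi, j, hj, rfl⟩
    exact (hdeg i hi j hj).2 (pair_mem_edgesZ.1 hz).2.2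
  · exact mem_graphZ.2 (hf z hz)

lemma graphCond_le_graphCond {d d' : ZFSet} {g g' : ZFSet → ZFSet} (hd : d ⊆ d')
    (hg : Set.EqOn g g' d) : FriedmanLe (graphCond d' g') (graphCond d g) := by
  refine friedmanLe_tripleZ_iff.2 ⟨hd, fun z => ⟨fun hz => ?_, ?_⟩, fun z hz => ?_⟩
  · obtain ⟨i, hi, j, hj, rfl, hij⟩ := mem_edgesZ.1 hz
    exact ⟨pair_mem_edgesZ.2 ⟨hd hi, hd hj, hg hi ▸ hg hj ▸ hij⟩, i, hi, j, hj, rfl⟩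
  · rintro ⟨hz, i, hi, j, hj, rfl⟩
    exact pair_mem_edgesZ.2 ⟨hi, hj, hg hi ▸ hg hj ▸ (pair_mem_edgesZ.1 hz).2.2⟩
  · obtain ⟨i, hi, rfl⟩ := mem_graphZ.1 hz
    exact pair_mem_graphZ.2 ⟨hd hi, hg hi⟩

def tagZ (x : ZFSet) : ZFSet := {∅, {x}}

lemma tagZ_injective : Function.Injective tagZ := fun x y h => by
  have hx : ({x} : ZFSet) ∈ tagZ y := h ▸ ZFSet.mem_pair.2 (Or.inr rfl)
  rcases ZFSet.mem_pair.1 hx with h' | h'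
  · exact absurd (h' ▸ ZFSet.mem_singleton.2 rfl) (ZFSet.notMem_empty x)
  · exact ZFSet.singleton_injective h'

section Realize

variable {e : ZFSet} (hwf : WellFounded fun a b : ZFSet => ZFSet.pair a b ∈ e) (d : ZFSet)

/-- Mostowski-style realization of a well-founded relation `e` on `d` by `∈`:
`realize i = {tagZ i} ∪ {realize j | j ∈ d, (j, i) ∈ e}`. The tags contain `∅` while no
`realize j` does, which makes `realize` injective. -/
noncomputable def realize : ZFSet → ZFSet :=
  hwf.fix fun i ih => insert (tagZ i)
    (ZFSet.image (fun j => if h : ZFSet.pair j i ∈ e then ih j h else ∅)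
      (d.sep fun j => ZFSet.pair j i ∈ e))

variable {hwf d}

lemma mem_realize {i z : ZFSet} :
    z ∈ realize hwf d i ↔ z = tagZ i ∨ ∃ j ∈ d, ZFSet.pair j i ∈ e ∧ z = realize hwf d j := by
  conv_lhs => rw [realize, WellFounded.fix_eq]
  rw [ZFSet.mem_insert_iff, ZFSet.mem_image]
  refine or_congr Iff.rfl ⟨?_, ?_⟩
  · rintro ⟨j, hj, rfl⟩
    obtain ⟨hjd, hji⟩ := ZFSet.mem_sep.1 hj
    exact ⟨j, hjd, hji, by rw [dif_pos hji]; rfl⟩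
  · rintro ⟨j, hjd, hji, rfl⟩
    exact ⟨j, ZFSet.mem_sep.2 ⟨hjd, hji⟩, by rw [dif_pos hji]; rfl⟩

lemma empty_notMem_realize (i : ZFSet) : ∅ ∉ realize hwf d i := by
  intro h
  rcases mem_realize.1 h with h | ⟨j, -, -, h⟩
  · have h' : (∅ : ZFSet) ∈ tagZ i := ZFSet.mem_pair.2 (Or.inl rfl)
    rw [← h] at h'
    exact ZFSet.notMem_empty _ h'
  · have h' : tagZ j ∈ realize hwf d j := mem_realize.2 (Or.inl rfl)
    rw [← h] at h'
    exact ZFSet.notMem_empty _ h'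

lemma realize_ne_tagZ (i x : ZFSet) : realize hwf d i ≠ tagZ x := fun h => by
  have h' : (∅ : ZFSet) ∈ tagZ x := ZFSet.mem_pair.2 (Or.inl rfl)
  rw [← h] at h'
  exact empty_notMem_realize i h'

lemma realize_injective : Function.Injective (realize hwf d) := fun i j h => by
  have hi : tagZ i ∈ realize hwf d j := h ▸ mem_realize.2 (Or.inl rfl)
  rcases mem_realize.1 hi with h' | ⟨k, -, -, h'⟩
  · exact tagZ_injective h'
  · exact absurd h'.symm (realize_ne_tagZ k i)

lemma realize_mem_realize_iff {i j : ZFSet} :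
    realize hwf d j ∈ realize hwf d i ↔ j ∈ d ∧ ZFSet.pair j i ∈ e := by
  rw [mem_realize]
  constructor
  · rintro (h | ⟨k, hk, hki, h⟩)
    · exact absurd h (realize_ne_tagZ j i)
    · rw [realize_injective h]
      exact ⟨hk, hki⟩
  · rintro ⟨hj, hji⟩
    exact Or.inr ⟨j, hj, hji, rfl⟩

lemma realize_mem (hM : IsCTM M) (hfin : (d : Set ZFSet).Finite) (hdM : d ⊆ M) {i : ZFSet}
    (hi : i ∈ M) : realize hwf d i ∈ M := by
  induction i using hwf.induction with
  | _ i ih =>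
    have hsub : (realize hwf d i : Set ZFSet) ⊆ insert (tagZ i) (realize hwf d '' d) := by
      intro z hz
      rcases mem_realize.1 hz with rfl | ⟨j, hj, -, rfl⟩
      exacts [Set.mem_insert _ _, Set.mem_insert_of_mem _ ⟨j, hj, rfl⟩]
    refine hM.mem_of_finite (((hfin.image _).insert _).subset hsub) fun z hz => ?_
    rcases mem_realize.1 hz with rfl | ⟨j, hj, hji, rfl⟩
    · exact hM.pairing _ hM.empty_mem _ (hM.singleton_mem hi)
    · exact ih j hji (hdM hj)

end Realize

/-- A condition with empty function part is completed by realizing its acyclic relation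
by `∈`. -/
lemma exists_graphCond_le (hM : IsCTM M) {p : ZFSet} (hp : p ∈ FriedmanP M) :
    ∃ d g, IsGraphData M d g ∧ FriedmanLe (graphCond d g) p := by
  obtain ⟨d, e, f, hc, rfl⟩ := hp
  have hdM : d ⊆ M := fun i hi => hM.mem_of_mem_omega (hc.d_sub i hi)
  rcases hc.f_dom with hdom | hdom
  · have hf : ∀ z ∈ f, False := fun z hz => by
      obtain ⟨i, a, rfl⟩ := hc.f_fun.1 z hz
      exact (hdom ▸ (⟨a, hz⟩ : i ∈ domZ f) : i ∈ (∅ : Set ZFSet))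
    refine ⟨d, realize hc.wellFounded d, ⟨hc.d_sub, hc.d_fin,
      fun i _ j _ h => realize_injective h, fun i hi => realize_mem hM hc.d_fin hdM (hdM hi)⟩,
      graphCond_le_tripleZ hc.e_sub (fun i hi j _ => ?_) fun z hz => (hf z hz).elim⟩
    rw [realize_mem_realize_iff, and_iff_right hi]
  · have htot : ∀ i ∈ d, ∃ a, ZFSet.pair i a ∈ f := fun i hi => by
      show i ∈ domZ f
      rw [hdom]
      exact hi
    choose! g hg using htot
    refine ⟨d, g, ⟨hc.d_sub, hc.d_fin, fun i hi j hj h => hc.f_inj i j (g i) (hg i hi)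
      (h ▸ hg j hj), fun i hi => hc.f_ran _ ⟨i, hg i hi⟩⟩,
      graphCond_le_tripleZ hc.e_sub (fun i hi j hj => hc.edge_iff (hg i hi) (hg j hj))
      fun z hz => ?_⟩
    obtain ⟨i, a, rfl⟩ := hc.f_fun.1 z hz
    have hi := hc.mem_of_pair_mem_f hz
    exact ⟨i, hi, by rw [hc.f_fun.2 i a (g i) hz (hg i hi)]⟩

namespace IsGraphData

variable {d : ZFSet} {g : ZFSet → ZFSet} (h : IsGraphData M d g)
include h

lemma insert {n y : ZFSet} (hn : n ∈ ZFSet.omega) (hnd : n ∉ d) (hy : y ∈ M)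
    (hyg : y ∉ g '' d) : IsGraphData M (insert n d) (Function.update g n y) := by
  have heq : Set.EqOn (Function.update g n y) g d := fun i hi =>
    Function.update_of_ne (ne_of_mem_of_not_mem hi hnd) _ _
  refine ⟨fun i hi => ?_, ?_, ?_, fun i hi => ?_⟩
  · rcases ZFSet.mem_insert_iff.1 hi with rfl | hi
    exacts [hn, h.sub_omega i hi]
  · rw [ZFSet.coe_insert]
    exact h.finite.insert n
  · rw [ZFSet.coe_insert, Set.injOn_insert hnd, heq.image_eq, Function.update_self]
    exact ⟨h.injOn.congr heq.symm, hyg⟩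
  · rcases ZFSet.mem_insert_iff.1 hi with rfl | hi
    · rwa [Function.update_self]
    · rw [heq hi]
      exact h.mem i hi

lemma exists_mem_image {x : ZFSet} (hx : x ∈ M) :
    ∃ d' g', IsGraphData M d' g' ∧ d ⊆ d' ∧ Set.EqOn g g' d ∧ x ∈ g' '' d' := by
  by_cases hxg : x ∈ g '' d
  · exact ⟨d, g, h, subset_rfl, Set.eqOn_refl _ _, hxg⟩
  obtain ⟨k, hk, hkd⟩ := exists_mem_omega_notMem h.finite
  refine ⟨_, _, h.insert hk hkd hx hxg, fun i hi => ZFSet.mem_insert_of_mem _ hi,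
    fun i hi => (Function.update_of_ne (ne_of_mem_of_not_mem hi hkd) _ _).symm,
    ⟨k, ZFSet.mem_insert _ _, Function.update_self _ _ _⟩⟩

lemma exists_mem_dom (hM : IsCTM M) {n : ZFSet} (hn : n ∈ ZFSet.omega) :
    ∃ d' g', IsGraphData M d' g' ∧ d ⊆ d' ∧ Set.EqOn g g' d ∧ n ∈ d' := by
  by_cases hnd : n ∈ d
  · exact ⟨d, g, h, subset_rfl, Set.eqOn_refl _ _, hnd⟩
  obtain ⟨y, hyM, hyg⟩ := (hM.infinite.sdiff (h.finite.image g)).nonempty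
  exact ⟨_, _, h.insert hn hnd hyM hyg, fun i hi => ZFSet.mem_insert_of_mem _ hi,
    fun i hi => (Function.update_of_ne (ne_of_mem_of_not_mem hi hnd) _ _).symm,
    ZFSet.mem_insert _ _⟩

lemma subset_M (hM : IsCTM M) : d ⊆ M := fun i hi => hM.mem_of_mem_omega (h.sub_omega i hi)

lemma d_mem (hM : IsCTM M) : d ∈ M :=
  hM.mem_of_finite h.finite (h.subset_M hM)

lemma edgesZ_mem (hM : IsCTM M) : edgesZ d g ∈ M := by
  refine hM.mem_of_finite (((h.finite.prod h.finite).image fun q => ZFSet.pair q.1 q.2).subset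
    fun z hz => ?_) fun z hz => ?_ <;> obtain ⟨i, hi, j, hj, rfl, -⟩ := mem_edgesZ.1 hz
  exacts [⟨(i, j), ⟨hi, hj⟩, rfl⟩, hM.pair_mem (h.subset_M hM hi) (h.subset_M hM hj)]

lemma graphZ_mem (hM : IsCTM M) : graphZ d g ∈ M := by
  refine hM.mem_of_finite (by rw [graphZ, ZFSet.coe_image]; exact h.finite.image _)
    fun z hz => ?_
  obtain ⟨i, hi, rfl⟩ := mem_graphZ.1 hz
  exact hM.pair_mem (h.subset_M hM hi) (h.mem i hi)

lemma graphCond_mem (hM : IsCTM M) : graphCond d g ∈ M :=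
  hM.pair_mem (h.d_mem hM) (hM.pair_mem (h.edgesZ_mem hM) (h.graphZ_mem hM))

end IsGraphData

def denseCond (M n x : ZFSet) : Set ZFSet :=
  {p | ∃ d g, IsGraphData M d g ∧ n ∈ d ∧ x ∈ g '' d ∧ p = graphCond d g}

lemma denseCond_subset_friedmanP {n x : ZFSet} : denseCond M n x ⊆ FriedmanP M := by
  rintro p ⟨d, g, h, -, -, rfl⟩
  exact h.graphCond_mem_friedmanP

lemma denseIn_denseCond (hM : IsCTM M) {n x : ZFSet} (hn : n ∈ ZFSet.omega) (hx : x ∈ M) :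
    DenseIn (FriedmanP M) FriedmanLe (denseCond M n x) := by
  intro p hp
  obtain ⟨d₀, g₀, h₀, hle₀⟩ := exists_graphCond_le hM hp
  obtain ⟨d₁, g₁, h₁, hd₁, hg₁, hx₁⟩ := h₀.exists_mem_image hx
  obtain ⟨d₂, g₂, h₂, hd₂, hg₂, hn₂⟩ := h₁.exists_mem_dom hM hn
  have hx₂ : x ∈ g₂ '' d₂ := by
    obtain ⟨i, hi, rfl⟩ := hx₁
    exact ⟨i, hd₂ hi, (hg₂ hi).symm⟩
  refine ⟨_, ⟨d₂, g₂, h₂, hn₂, hx₂, rfl⟩, h₂.graphCond_mem_friedmanP, friedmanLe_trans ?_ hle₀⟩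
  exact graphCond_le_graphCond (fun i hi => hd₂ (hd₁ hi)) fun i hi => (hg₁ hi).trans (hg₂ (hd₁ hi))

/-- A first-order description over `(M, ∈)` of the triples `graphCond d g`, with `ω` as the
parameter `w` (see `IsGraphData.isGraphTriple` and `IsGraphTriple.exists_graphData`). -/
def IsGraphTriple (M w d e f : ZFSet) : Prop :=
  (∃ k ∈ w, ∀ i ∈ d, i ∈ k) ∧
  (∀ z ∈ e, ∃ i ∈ d, ∃ j ∈ d, z = ZFSet.pair i j) ∧
  (∀ z ∈ f, ∃ i ∈ d, ∃ a ∈ M, z = ZFSet.pair i a) ∧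
  (∀ i ∈ d, ∃ a ∈ M, ZFSet.pair i a ∈ f) ∧
  ∀ i ∈ M, ∀ j ∈ M, ∀ a ∈ M, ∀ b ∈ M, ZFSet.pair i a ∈ f → ZFSet.pair j b ∈ f →
    (i = j ↔ a = b) ∧ (ZFSet.pair i j ∈ e ↔ a ∈ b)

lemma IsGraphData.isGraphTriple {d : ZFSet} {g : ZFSet → ZFSet} (h : IsGraphData M d g) :
    IsGraphTriple M ZFSet.omega d (edgesZ d g) (graphZ d g) := by
  refine ⟨(finite_iff_exists_bound h.sub_omega).1 h.finite, fun z hz => ?_, fun z hz => ?_,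
    fun i hi => ⟨g i, h.mem i hi, pair_mem_graphZ.2 ⟨hi, rfl⟩⟩, fun i _ j _ a _ b _ ha hb => ?_⟩
  · obtain ⟨i, hi, j, hj, rfl, -⟩ := mem_edgesZ.1 hz
    exact ⟨i, hi, j, hj, rfl⟩
  · obtain ⟨i, hi, rfl⟩ := mem_graphZ.1 hz
    exact ⟨i, hi, g i, h.mem i hi, rfl⟩
  obtain ⟨hi, rfl⟩ := pair_mem_graphZ.1 ha
  obtain ⟨hj, rfl⟩ := pair_mem_graphZ.1 hb
  exact ⟨⟨fun hij => hij ▸ rfl, fun hij => h.injOn hi hj hij⟩,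
    pair_mem_edgesZ.trans ⟨fun h => h.2.2, fun h => ⟨hi, hj, h⟩⟩⟩

lemma IsGraphTriple.exists_graphData (hM : IsCTM M) {d e f : ZFSet}
    (h : IsGraphTriple M ZFSet.omega d e f) :
    ∃ g, IsGraphData M d g ∧ e = edgesZ d g ∧ f = graphZ d g := by
  obtain ⟨⟨k, hk, hdk⟩, he, hshape, htot, hcompat⟩ := h
  have hd : ∀ i ∈ d, i ∈ ZFSet.omega := fun i hi => mem_omega_of_mem hk (hdk i hi)
  have hdM : d ⊆ M := fun i hi => hM.mem_of_mem_omega (hd i hi)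
  choose! g hgM hg using htot
  have hcompat' : ∀ i ∈ d, ∀ j ∈ d, (i = j ↔ g i = g j) ∧ (ZFSet.pair i j ∈ e ↔ g i ∈ g j) :=
    fun i hi j hj => hcompat i (hdM hi) j (hdM hj) _ (hgM i hi) _ (hgM j hj) (hg i hi) (hg j hj)
  refine ⟨g, ⟨hd, (finite_iff_exists_bound hd).2 ⟨k, hk, hdk⟩,
    fun i hi j hj hij => (hcompat' i hi j hj).1.2 hij, hgM⟩, ZFSet.ext fun z => ?_,
    ZFSet.ext fun z => ?_⟩
  · rw [mem_edgesZ]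
    constructor
    · intro hz
      obtain ⟨i, hi, j, hj, rfl⟩ := he z hz
      exact ⟨i, hi, j, hj, rfl, (hcompat' i hi j hj).2.1 hz⟩
    · rintro ⟨i, hi, j, hj, rfl, hij⟩
      exact (hcompat' i hi j hj).2.2 hij
  · rw [mem_graphZ]
    constructor
    · intro hz
      obtain ⟨i, hi, a, haM, rfl⟩ := hshape z hz
      refine ⟨i, hi, ?_⟩
      rw [(hcompat i (hdM hi) i (hdM hi) a haM _ (hgM i hi) hz (hg i hi)).1.1 rfl]
    · rintro ⟨i, hi, rfl⟩
      exact hg i hi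

lemma isDefinable_isGraphTriple (hM : IsCTM M) {n : ℕ} (iw id ie if' : Fin n) :
    IsDefinable M fun v => IsGraphTriple M (v iw) (v id) (v ie) (v if') := by
  unfold IsGraphTriple
  refine .and ?_ (.and ?_ (.and ?_ (.and ?_ ?_)))
  · exact .exists_mem_var hM _ <| .forall_mem_var hM _ <| .mem _ _
  · exact .forall_mem_var hM _ <| .exists_mem_var hM _ <| .exists_mem_var hM _ <|
      (IsDefinableTerm.var _).eq (.pair hM (.var _) (.var _))
  · exact .forall_mem_var hM _ <| .exists_mem_var hM _ <| .exists_mem <|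
      (IsDefinableTerm.var _).eq (.pair hM (.var _) (.var _))
  · exact .forall_mem_var hM _ <| .exists_mem <|
      (IsDefinableTerm.pair hM (.var _) (.var _)).mem (.var _)
  · have hpair {m : ℕ} (i j k : Fin m) : IsDefinable M fun v => ZFSet.pair (v i) (v j) ∈ v k :=
      (IsDefinableTerm.pair hM (.var _) (.var _)).mem (.var _)
    exact .forall_mem <| .forall_mem <| .forall_mem <| .forall_mem <|
      (hpair _ _ _).imp <| (hpair _ _ _).imp <|
        ((IsDefinable.eq _ _).iff (.eq _ _)).and ((hpair _ _ _).iff (.mem _ _))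

lemma denseCond_mem_defClasses (hM : IsCTM M) {n x : ZFSet} (hn : n ∈ M) (hx : x ∈ M) :
    denseCond M n x ∈ DefClasses M := by
  have hdef : IsDefinable M fun v : Fin 4 → ZFSet => ∃ d ∈ M, ∃ e ∈ M, ∃ f ∈ M,
      v 3 = tripleZ d e f ∧ IsGraphTriple M (v 0) d e f ∧ v 1 ∈ d ∧
        ∃ i ∈ M, ZFSet.pair i (v 2) ∈ f :=
    .exists_mem <| .exists_mem <| .exists_mem <|
      ((IsDefinableTerm.var _).eq (.triple hM (.var _) (.var _) (.var _))).and <|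
      (isDefinable_isGraphTriple hM _ _ _ _).and <| (IsDefinable.mem _ _).and <|
      .exists_mem <| (IsDefinableTerm.pair hM (.var _) (.var _)).mem (.var _)
  refine mem_defClasses ?_ hdef (a := ![ZFSet.omega, n, x]) ?_ fun p _ => ?_
  · rintro p ⟨d, g, h, -, -, rfl⟩
    exact h.graphCond_mem hM
  · intro i
    fin_cases i
    exacts [hM.infinity, hn, hx]
  · show p ∈ denseCond M n x ↔ ∃ d ∈ M, ∃ e ∈ M, ∃ f ∈ M, p = tripleZ d e f ∧
      IsGraphTriple M ZFSet.omega d e f ∧ n ∈ d ∧ ∃ i ∈ M, ZFSet.pair i x ∈ f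
    constructor
    · rintro ⟨d, g, h, hnd, ⟨i, hi, rfl⟩, rfl⟩
      exact ⟨d, h.d_mem hM, _, h.edgesZ_mem hM, _, h.graphZ_mem hM, rfl, h.isGraphTriple, hnd,
        i, h.subset_M hM hi, pair_mem_graphZ.2 ⟨hi, rfl⟩⟩
    · rintro ⟨d, -, e, -, f, -, rfl, hT, hnd, i, -, hi⟩
      obtain ⟨g, h, rfl, rfl⟩ := hT.exists_graphData hM
      obtain ⟨hid, rfl⟩ := pair_mem_graphZ.1 hi
      exact ⟨d, g, h, hnd, ⟨i, hid, rfl⟩, rfl⟩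

/-! ### The generic enumeration -/

/-- The condition forcing `m E n`. -/
def pCond (m n : ZFSet) : ZFSet := tripleZ {m, n} {ZFSet.pair m n} ∅

lemma pCond_mem_friedmanP {m n : ZFSet} (hm : m ∈ ZFSet.omega) (hn : n ∈ ZFSet.omega)
    (hmn : m ≠ n) : pCond m n ∈ FriedmanP M := by
  have hdom : domZ (∅ : ZFSet) = ∅ := Set.eq_empty_of_forall_notMem fun _ ⟨_, h⟩ =>
    ZFSet.notMem_empty _ h
  refine ⟨_, _, _, ⟨fun i hi => ?_, ?_, fun z hz => ?_, ?_, ⟨fun z hz => ?_, fun _ _ _ h => ?_⟩,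
    fun _ _ _ h => ?_, Or.inl hdom, fun _ ⟨_, h⟩ => ?_, fun _ _ _ _ _ _ _ h => ?_⟩, rfl⟩
  · rcases ZFSet.mem_pair.1 hi with rfl | rfl
    exacts [hm, hn]
  · exact ((Set.finite_singleton n).insert m).subset fun z hz => ZFSet.mem_pair.1 hz
  · exact ⟨m, ZFSet.mem_pair.2 (Or.inl rfl), n, ZFSet.mem_pair.2 (Or.inr rfl),
      ZFSet.mem_singleton.1 hz⟩
  · refine acyclicZ_of_forall_mem (fun i => if i = m then m else {m}) fun a b hab => ?_
    obtain ⟨rfl, rfl⟩ := ZFSet.pair_injective (ZFSet.mem_singleton.1 hab)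
    simp [hmn.symm]
  all_goals exact absurd ‹_› (ZFSet.notMem_empty _)

lemma pCond_mem (hM : IsCTM M) {m n : ZFSet} (hm : m ∈ M) (hn : n ∈ M) : pCond m n ∈ M :=
  hM.pair_mem (hM.pairing _ hm _ hn)
    (hM.pair_mem (hM.singleton_mem (hM.pair_mem hm hn)) hM.empty_mem)

/-- The maximal condition `⟨∅, ∅, ∅⟩`, written as a graph condition. -/
noncomputable def oneCond : ZFSet := graphCond ∅ id

lemma isGraphData_empty : IsGraphData M ∅ id :=
  ⟨by simp, by simp, by simp, by simp⟩

lemma oneCond_mem_friedmanP : oneCond ∈ FriedmanP M :=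
  isGraphData_empty.graphCond_mem_friedmanP

lemma oneCond_mem (hM : IsCTM M) : oneCond ∈ M :=
  isGraphData_empty.graphCond_mem hM

lemma le_oneCond {p : ZFSet} (hp : p ∈ FriedmanP M) : FriedmanLe p oneCond := by
  obtain ⟨d, e, f, -, rfl⟩ := hp
  refine friedmanLe_tripleZ_iff.2 ⟨ZFSet.empty_subset _, fun z => ?_, fun z hz => ?_⟩
  · simp [mem_edgesZ]
  · simp [mem_graphZ] at hz

lemma FCond.le_pCond {d e f m n a b : ZFSet} (hc : FCond M d e f) (ha : ZFSet.pair m a ∈ f)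
    (hb : ZFSet.pair n b ∈ f) (hab : a ∈ b) : FriedmanLe (tripleZ d e f) (pCond m n) := by
  refine friedmanLe_tripleZ_iff.2 ⟨fun c hc' => ?_, fun z => ⟨fun hz => ?_, ?_⟩,
    ZFSet.empty_subset _⟩
  · rcases ZFSet.mem_pair.1 hc' with rfl | rfl
    exacts [hc.mem_of_pair_mem_f ha, hc.mem_of_pair_mem_f hb]
  · rw [ZFSet.mem_singleton.1 hz]
    exact ⟨(hc.edge_iff ha hb).2 hab, m, ZFSet.mem_pair.2 (Or.inl rfl), n,
      ZFSet.mem_pair.2 (Or.inr rfl), rfl⟩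
  · rintro ⟨hz, c, hc', c', hc'', rfl⟩
    rcases ZFSet.mem_pair.1 hc' with rfl | rfl <;> rcases ZFSet.mem_pair.1 hc'' with rfl | rfl
    · exact absurd ((hc.edge_iff ha ha).1 hz) (ZFSet.mem_irrefl _)
    · exact ZFSet.mem_singleton.2 rfl
    · exact absurd hab (ZFSet.mem_asymm ((hc.edge_iff hb ha).1 hz))
    · exact absurd ((hc.edge_iff hb hb).1 hz) (ZFSet.mem_irrefl _)

def GenRel (G : Set ZFSet) (n y : ZFSet) : Prop :=
  ∃ d e f, tripleZ d e f ∈ G ∧ ZFSet.pair n y ∈ f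

noncomputable def genEnum (G : Set ZFSet) (n : ZFSet) : ZFSet :=
  if h : ∃ y, GenRel G n y then h.choose else ∅

namespace IsGenericRaw

variable {G : Set ZFSet} (hG : IsGenericRaw M (DefClasses M) (FriedmanP M) FriedmanLe G)
include hG

lemma exists_graphCond_mem (hM : IsCTM M) {n x : ZFSet} (hn : n ∈ ZFSet.omega) (hx : x ∈ M) :
    ∃ d g, IsGraphData M d g ∧ n ∈ d ∧ x ∈ g '' d ∧ graphCond d g ∈ G := by
  obtain ⟨p, ⟨d, g, h, hnd, hxg, rfl⟩, hpG⟩ := hG.meets _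
    (denseCond_mem_defClasses hM (hM.mem_of_mem_omega hn) hx) denseCond_subset_friedmanP
    (denseIn_denseCond hM hn hx)
  exact ⟨d, g, h, hnd, hxg, hpG⟩

lemma oneCond_mem (hM : IsCTM M) : oneCond ∈ G := by
  obtain ⟨d, g, h, -, -, hG'⟩ := hG.exists_graphCond_mem hM ZFSet.omega_zero hM.empty_mem
  exact hG.upward _ hG' _ oneCond_mem_friedmanP (le_oneCond h.graphCond_mem_friedmanP)

lemma exists_common_le {p q : ZFSet} (hp : p ∈ G) (hq : q ∈ G) :
    ∃ d e f, tripleZ d e f ∈ G ∧ FCond M d e f ∧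
      FriedmanLe (tripleZ d e f) p ∧ FriedmanLe (tripleZ d e f) q := by
  obtain ⟨r, hr, hrp, hrq⟩ := hG.compat p hp q hq
  obtain ⟨d, e, f, hc, rfl⟩ := hG.sub hr
  exact ⟨d, e, f, hr, hc, hrp, hrq⟩

lemma exists_fcond_of_genRel {m n a b : ZFSet} (hm : GenRel G m a) (hn : GenRel G n b) :
    ∃ d e f, tripleZ d e f ∈ G ∧ FCond M d e f ∧ ZFSet.pair m a ∈ f ∧ ZFSet.pair n b ∈ f := by
  obtain ⟨d₁, e₁, f₁, h₁, hm⟩ := hm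
  obtain ⟨d₂, e₂, f₂, h₂, hn⟩ := hn
  obtain ⟨d, e, f, hG', hc, hle₁, hle₂⟩ := hG.exists_common_le h₁ h₂
  exact ⟨d, e, f, hG', hc, (friedmanLe_tripleZ_iff.1 hle₁).2.2 hm,
    (friedmanLe_tripleZ_iff.1 hle₂).2.2 hn⟩

lemma eq_iff_eq_of_genRel {m n a b : ZFSet} (hm : GenRel G m a) (hn : GenRel G n b) :
    m = n ↔ a = b := by
  obtain ⟨d, e, f, -, hc, ha, hb⟩ := hG.exists_fcond_of_genRel hm hn
  exact ⟨fun h => hc.f_fun.2 m a b ha (h ▸ hb), fun h => hc.f_inj m n a ha (h ▸ hb)⟩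

lemma genRel_genEnum (hM : IsCTM M) {n : ZFSet} (hn : n ∈ ZFSet.omega) :
    GenRel G n (genEnum G n) := by
  obtain ⟨d, g, -, hnd, -, hG'⟩ := hG.exists_graphCond_mem hM hn hM.empty_mem
  have hex : ∃ y, GenRel G n y := ⟨g n, _, _, _, hG', pair_mem_graphZ.2 ⟨hnd, rfl⟩⟩
  rw [genEnum, dif_pos hex]
  exact hex.choose_spec

lemma genEnum_mem (hM : IsCTM M) {n : ZFSet} (hn : n ∈ ZFSet.omega) : genEnum G n ∈ M := by
  obtain ⟨d, e, f, hG', h⟩ := hG.genRel_genEnum hM hn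
  obtain ⟨d', e', f', hc, heq⟩ := hG.sub hG'
  obtain ⟨rfl, rfl, rfl⟩ := tripleZ_inj.1 heq
  exact hc.f_ran _ ⟨n, h⟩

lemma genEnum_injOn (hM : IsCTM M) {m n : ZFSet} (hm : m ∈ ZFSet.omega) (hn : n ∈ ZFSet.omega)
    (h : genEnum G m = genEnum G n) : m = n :=
  (hG.eq_iff_eq_of_genRel (hG.genRel_genEnum hM hm) (hG.genRel_genEnum hM hn)).2 h

lemma genEnum_surj (hM : IsCTM M) {x : ZFSet} (hx : x ∈ M) :
    ∃ n ∈ ZFSet.omega, genEnum G n = x := by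
  obtain ⟨d, g, h, -, ⟨n, hnd, rfl⟩, hG'⟩ :=
    hG.exists_graphCond_mem hM ZFSet.omega_zero hx
  have hn := h.sub_omega n hnd
  exact ⟨n, hn, ((hG.eq_iff_eq_of_genRel (hG.genRel_genEnum hM hn)
    ⟨_, _, _, hG', pair_mem_graphZ.2 ⟨hnd, rfl⟩⟩).1 rfl)⟩

lemma pCond_mem_iff (hM : IsCTM M) {m n : ZFSet} (hm : m ∈ ZFSet.omega) (hn : n ∈ ZFSet.omega)
    (hmn : m ≠ n) : pCond m n ∈ G ↔ genEnum G m ∈ genEnum G n := by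
  obtain ⟨d, e, f, hG', hc, ha, hb⟩ :=
    hG.exists_fcond_of_genRel (hG.genRel_genEnum hM hm) (hG.genRel_genEnum hM hn)
  have hmd := hc.mem_of_pair_mem_f ha
  have hnd := hc.mem_of_pair_mem_f hb
  rw [← hc.edge_iff ha hb]
  constructor
  · intro hp
    obtain ⟨d', e', f', -, -, hle, hle'⟩ := hG.exists_common_le hG' hp
    obtain ⟨-, he, -⟩ := friedmanLe_tripleZ_iff.1 hle
    obtain ⟨-, he', -⟩ := friedmanLe_tripleZ_iff.1 hle'
    have hmn' := ((he' _).1 (ZFSet.mem_singleton.2 rfl)).1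
    exact (he _).2 ⟨hmn', m, hmd, n, hnd, rfl⟩
  · intro he
    exact hG.upward _ hG' _ (pCond_mem_friedmanP hm hn hmn)
      (hc.le_pCond ha hb ((hc.edge_iff ha hb).1 he))

end IsGenericRaw

/-! ### The name of `E` -/

lemma mem_val {G : Set ZFSet} {σ z : ZFSet} :
    z ∈ val G σ ↔ ∃ τ, (∃ p ∈ G, ZFSet.pair τ p ∈ σ) ∧ z = val G τ := by
  conv_lhs => rw [val, WellFounded.fix_eq]
  rw [ZFSet.mem_image]
  constructor
  · rintro ⟨τ, hτ, rfl⟩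
    obtain ⟨-, p, hp, hτp⟩ := ZFSet.mem_sep.1 hτ
    rw [dif_pos (transGen_mem_of_pair_mem hτp)]
    exact ⟨τ, ⟨p, hp, hτp⟩, rfl⟩
  · rintro ⟨τ, ⟨p, hp, hτp⟩, rfl⟩
    refine ⟨τ, ZFSet.mem_sep.2 ⟨?_, p, hp, hτp⟩,
      by rw [dif_pos (transGen_mem_of_pair_mem hτp)]; rfl⟩
    exact ZFSet.mem_sUnion.2 ⟨{τ, p}, ZFSet.mem_sUnion.2 ⟨_, hτp, by simp [ZFSet.pair]⟩, by simp⟩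

/-- The canonical name `x̌ = {⟨y̌, 1⟩ | y ∈ x}`. -/
noncomputable def check : ZFSet → ZFSet :=
  ZFSet.mem_wf.fix fun x ih =>
    ZFSet.image (fun y => if h : y ∈ x then ZFSet.pair (ih y h) oneCond else ∅) x

lemma mem_check {x z : ZFSet} : z ∈ check x ↔ ∃ y ∈ x, z = ZFSet.pair (check y) oneCond := by
  conv_lhs => rw [check, WellFounded.fix_eq]
  rw [ZFSet.mem_image]
  refine exists_congr fun y => and_congr_right fun hy => ?_
  rw [dif_pos hy, eq_comm]
  rfl

lemma isName_check (x : ZFSet) : IsName (FriedmanP M) (check x) := by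
  induction x using ZFSet.inductionOn with
  | _ x ih =>
    refine ⟨_, fun z hz => ?_, fun τ p hτp => ?_⟩
    · obtain ⟨y, -, rfl⟩ := mem_check.1 hz
      exact ⟨_, _, oneCond_mem_friedmanP, rfl⟩
    · obtain ⟨y, hy, h⟩ := mem_check.1 hτp
      rw [(ZFSet.pair_injective h).1]
      exact ih y hy

lemma val_check {G : Set ZFSet} (hone : oneCond ∈ G) (x : ZFSet) : val G (check x) = x := by
  induction x using ZFSet.inductionOn with
  | _ x ih =>
    ext z
    rw [mem_val]
    constructor
    · rintro ⟨τ, ⟨p, -, hτp⟩, rfl⟩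
      obtain ⟨y, hy, h⟩ := mem_check.1 hτp
      rw [(ZFSet.pair_injective h).1, ih y hy]
      exact hy
    · intro hz
      exact ⟨check z, ⟨oneCond, hone, mem_check.2 ⟨z, hz, rfl⟩⟩, (ih z hz).symm⟩

lemma check_mem (hM : IsCTM M) {x : ZFSet} (hfin : (x : Set ZFSet).Finite)
    (h : ∀ y ∈ x, check y ∈ M) : check x ∈ M := by
  refine hM.mem_of_finite ((hfin.image fun y => ZFSet.pair (check y) oneCond).subset
    fun z hz => ?_) fun z hz => ?_ <;> obtain ⟨y, hy, rfl⟩ := mem_check.1 hz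
  exacts [⟨y, hy, rfl⟩, hM.pair_mem (h y hy) (oneCond_mem hM)]

lemma check_mem_of_mem_omega (hM : IsCTM M) {k : ZFSet} (hk : k ∈ ZFSet.omega) :
    check k ∈ M := by
  obtain ⟨K, rfl⟩ := mem_omega_iff.1 hk
  induction K using Nat.strong_induction_on with
  | _ K ih =>
    refine check_mem hM (finite_natZ K) fun y hy => ?_
    obtain ⟨j, hj, rfl⟩ := mem_natZ.1 hy
    exact ih j hj (natZ_mem_omega j)

/-- A first-order substitute for the recursion defining `check`: every `⟨k, c⟩ ∈ C` obeys
`c = {⟨c', one⟩ | j ∈ k, ⟨j, c'⟩ ∈ C}` relativized to `M`, so `c = ǩ` (`IsCheckSeq.eq_check`). -/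
def IsCheckSeq (M one C : ZFSet) : Prop :=
  ∀ k ∈ M, ∀ c ∈ M, ZFSet.pair k c ∈ C →
    (∀ j ∈ k, ∃ c' ∈ M, ZFSet.pair j c' ∈ C) ∧
    ∀ w ∈ M, (w ∈ c ↔ ∃ j ∈ k, ∃ c' ∈ M, ZFSet.pair j c' ∈ C ∧ w = ZFSet.pair c' one)

lemma IsCheckSeq.eq_check (hM : IsCTM M) {C : ZFSet} (hCM : C ∈ M)
    (hC : IsCheckSeq M oneCond C) {k c : ZFSet} (hkc : ZFSet.pair k c ∈ C) : c = check k := by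
  induction k using ZFSet.inductionOn generalizing c with
  | _ k ih =>
    obtain ⟨hkM, hcM⟩ := hM.mem_of_pair_mem hCM hkc
    obtain ⟨htot, hmem⟩ := hC k hkM c hcM hkc
    ext w
    rw [mem_check]
    constructor
    · intro hw
      obtain ⟨j, hj, c', -, hjc, rfl⟩ := (hmem w (hM.mem_of_mem hcM hw)).1 hw
      exact ⟨j, hj, by rw [ih j hj hjc]⟩
    · rintro ⟨j, hj, rfl⟩
      obtain ⟨c', hc'M, hjc⟩ := htot j hj
      obtain rfl := ih j hj hjc
      exact (hmem _ (hM.pair_mem hc'M (oneCond_mem hM))).2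
        ⟨j, hj, _, hc'M, hjc, rfl⟩

noncomputable def checkGraph (S : ZFSet) : ZFSet :=
  ZFSet.image (fun j => ZFSet.pair j (check j)) S

lemma mem_checkGraph {S z : ZFSet} : z ∈ checkGraph S ↔ ∃ j ∈ S, z = ZFSet.pair j (check j) := by
  simp only [checkGraph, ZFSet.mem_image, eq_comm]

lemma pair_mem_checkGraph {S j c : ZFSet} :
    ZFSet.pair j c ∈ checkGraph S ↔ j ∈ S ∧ c = check j := by
  rw [mem_checkGraph]
  constructor
  · rintro ⟨j', hj', h⟩
    obtain ⟨rfl, rfl⟩ := ZFSet.pair_injective h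
    exact ⟨hj', rfl⟩
  · rintro ⟨hj, rfl⟩
    exact ⟨j, hj, rfl⟩

lemma isCheckSeq_checkGraph {S : ZFSet} (hS : S.IsTransitive) (hSM : ∀ j ∈ S, check j ∈ M) :
    IsCheckSeq M oneCond (checkGraph S) := by
  intro j _ c _ hjc
  obtain ⟨hj, rfl⟩ := pair_mem_checkGraph.1 hjc
  have hij : ∀ i ∈ j, i ∈ S := fun i hi => hS.mem_trans hi hj
  refine ⟨fun i hi => ⟨check i, hSM i (hij i hi), pair_mem_checkGraph.2 ⟨hij i hi, rfl⟩⟩,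
    fun w _ => mem_check.trans ⟨?_, ?_⟩⟩
  · rintro ⟨i, hi, rfl⟩
    exact ⟨i, hi, check i, hSM i (hij i hi), pair_mem_checkGraph.2 ⟨hij i hi, rfl⟩, rfl⟩
  · rintro ⟨i, hi, c', -, hic, rfl⟩
    exact ⟨i, hi, by rw [(pair_mem_checkGraph.1 hic).2]⟩

lemma exists_isCheckSeq (hM : IsCTM M) {k : ZFSet} (hk : k ∈ ZFSet.omega) :
    ∃ C ∈ M, IsCheckSeq M oneCond C ∧ ZFSet.pair k (check k) ∈ C := by
  have hS : insert k k ∈ ZFSet.omega := ZFSet.omega_succ hk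
  obtain ⟨K, hK⟩ := mem_omega_iff.1 hS
  have hfin : ((insert k k : ZFSet) : Set ZFSet).Finite := hK ▸ finite_natZ K
  have hω : ∀ j ∈ insert k k, j ∈ ZFSet.omega := fun j hj => mem_omega_of_mem hS hj
  have hcheck : ∀ j ∈ insert k k, check j ∈ M := fun j hj => check_mem_of_mem_omega hM (hω j hj)
  refine ⟨checkGraph (insert k k), hM.mem_of_finite
    (by rw [checkGraph, ZFSet.coe_image]; exact hfin.image _) fun z hz => ?_,
    isCheckSeq_checkGraph (fun j hj i hi => mem_trans_of_mem_omega hS hj hi) hcheck,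
    pair_mem_checkGraph.2 ⟨ZFSet.mem_insert _ _, rfl⟩⟩
  obtain ⟨j, hj, rfl⟩ := mem_checkGraph.1 hz
  exact hM.pair_mem (hM.mem_of_mem_omega (hω j hj)) (hcheck j hj)

lemma isDefinable_pair_mem (hM : IsCTM M) {n : ℕ} (i j k : Fin n) :
    IsDefinable M fun v => ZFSet.pair (v i) (v j) ∈ v k :=
  (IsDefinableTerm.pair hM (.var _) (.var _)).mem (.var _)

lemma isDefinable_isCheckSeq (hM : IsCTM M) {n : ℕ} (ione iC : Fin n) :
    IsDefinable M fun v => IsCheckSeq M (v ione) (v iC) := by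
  unfold IsCheckSeq
  exact .forall_mem <| .forall_mem <| (isDefinable_pair_mem hM _ _ _).imp <|
    (IsDefinable.forall_mem_var hM _ <| .exists_mem <| isDefinable_pair_mem hM _ _ _).and <|
    .forall_mem <| (IsDefinable.mem _ _).iff <| .exists_mem_var hM _ <| .exists_mem <|
      (isDefinable_pair_mem hM _ _ _).and ((IsDefinableTerm.var _).eq (.pair hM (.var _) (.var _)))

/-- A name for the ordered pair of the values of the names `a` and `b`. -/
def pairName (one a b : ZFSet) : ZFSet :=
  {ZFSet.pair {ZFSet.pair a one} one, ZFSet.pair {ZFSet.pair a one, ZFSet.pair b one} one}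

lemma check_doubleton (a b : ZFSet) :
    check {a, b} = {ZFSet.pair (check a) oneCond, ZFSet.pair (check b) oneCond} := by
  ext z
  simp only [mem_check, ZFSet.mem_pair, exists_eq_or_imp, exists_eq_left]

lemma check_pair (m n : ZFSet) :
    check (ZFSet.pair m n) = pairName oneCond (check m) (check n) := by
  rw [ZFSet.pair, check_doubleton, ← ZFSet.pair_eq_singleton m, check_doubleton,
    check_doubleton, ZFSet.pair_eq_singleton]
  rfl

def IsCheckOf (M one k c : ZFSet) : Prop :=
  ∃ C ∈ M, IsCheckSeq M one C ∧ ZFSet.pair k c ∈ C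

lemma isCheckOf_iff (hM : IsCTM M) {k c : ZFSet} (hk : k ∈ ZFSet.omega) :
    IsCheckOf M oneCond k c ↔ c = check k := by
  constructor
  · rintro ⟨C, hCM, hC, hkc⟩
    exact hC.eq_check hM hCM hkc
  · rintro rfl
    exact exists_isCheckSeq hM hk

noncomputable def nameEdge (m n : ZFSet) : ZFSet :=
  ZFSet.pair (check (ZFSet.pair m n)) (pCond m n)

def IsNameEdge (M one m n u : ZFSet) : Prop :=
  ∃ cm ∈ M, ∃ cn ∈ M, IsCheckOf M one m cm ∧ IsCheckOf M one n cn ∧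
    u = ZFSet.pair (pairName one cm cn) (pCond m n)

lemma isDefinable_isNameEdge (hM : IsCTM M) {k : ℕ} (ione im in' iu : Fin k) :
    IsDefinable M fun v => IsNameEdge M (v ione) (v im) (v in') (v iu) := by
  have hcheck {k : ℕ} (ione im ic : Fin k) :
      IsDefinable M fun v => IsCheckOf M (v ione) (v im) (v ic) :=
    .exists_mem <| (isDefinable_isCheckSeq hM _ _).and (isDefinable_pair_mem hM _ _ _)
  unfold IsNameEdge pairName pCond
  exact .exists_mem <| .exists_mem <| (hcheck _ _ _).and <| (hcheck _ _ _).and <|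
    (IsDefinableTerm.var _).eq <| .pair hM
      (.doubleton hM (.pair hM (.singleton hM (.pair hM (.var _) (.var _))) (.var _))
        (.pair hM (.doubleton hM (.pair hM (.var _) (.var _)) (.pair hM (.var _) (.var _)))
          (.var _)))
      (.triple hM (.doubleton hM (.var _) (.var _)) (.singleton hM (.pair hM (.var _) (.var _)))
        (.empty hM))

lemma isNameEdge_iff (hM : IsCTM M) {m n u : ZFSet} (hm : m ∈ ZFSet.omega)
    (hn : n ∈ ZFSet.omega) : IsNameEdge M oneCond m n u ↔ u = nameEdge m n := by
  rw [nameEdge, check_pair]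
  constructor
  · rintro ⟨cm, -, cn, -, hcm, hcn, rfl⟩
    rw [(isCheckOf_iff hM hm).1 hcm, (isCheckOf_iff hM hn).1 hcn]
  · rintro rfl
    exact ⟨_, check_mem_of_mem_omega hM hm, _, check_mem_of_mem_omega hM hn,
      (isCheckOf_iff hM hm).2 rfl, (isCheckOf_iff hM hn).2 rfl, rfl⟩

lemma nameEdge_mem (hM : IsCTM M) {m n : ZFSet} (hm : m ∈ ZFSet.omega) (hn : n ∈ ZFSet.omega) :
    nameEdge m n ∈ M := by
  have hone := oneCond_mem hM
  have hcm := hM.pair_mem (check_mem_of_mem_omega hM hm) hone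
  have hcn := hM.pair_mem (check_mem_of_mem_omega hM hn) hone
  refine hM.pair_mem ?_ (pCond_mem hM (hM.mem_of_mem_omega hm) (hM.mem_of_mem_omega hn))
  rw [check_pair]
  exact hM.pairing _ (hM.pair_mem (hM.singleton_mem hcm) hone) _
    (hM.pair_mem (hM.pairing _ hcm _ hcn) hone)

noncomputable def nameRow (m : ZFSet) : ZFSet :=
  ZFSet.image (nameEdge m) (ZFSet.omega.sep (· ≠ m))

/-- The name of the relation `E`. -/
noncomputable def nameE : ZFSet := ZFSet.sUnion (ZFSet.image nameRow ZFSet.omega)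

lemma mem_nameRow {m z : ZFSet} :
    z ∈ nameRow m ↔ ∃ n ∈ ZFSet.omega, n ≠ m ∧ z = nameEdge m n := by
  simp only [nameRow, ZFSet.mem_image, ZFSet.mem_sep]
  constructor
  · rintro ⟨n, ⟨hn, hnm⟩, rfl⟩
    exact ⟨n, hn, hnm, rfl⟩
  · rintro ⟨n, hn, hnm, rfl⟩
    exact ⟨n, ⟨hn, hnm⟩, rfl⟩

lemma mem_nameE {z : ZFSet} :
    z ∈ nameE ↔ ∃ m ∈ ZFSet.omega, ∃ n ∈ ZFSet.omega, n ≠ m ∧ z = nameEdge m n := by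
  simp only [nameE, ZFSet.mem_sUnion, ZFSet.mem_image]
  constructor
  · rintro ⟨_, ⟨m, hm, rfl⟩, hz⟩
    exact ⟨m, hm, mem_nameRow.1 hz⟩
  · rintro ⟨m, hm, hz⟩
    exact ⟨_, ⟨m, hm, rfl⟩, mem_nameRow.2 hz⟩

lemma nameRow_mem (hM : IsCTM M) {m : ZFSet} (hm : m ∈ ZFSet.omega) : nameRow m ∈ M := by
  have hone := oneCond_mem hM
  have hsep : ZFSet.omega.sep (· ≠ m) ∈ M :=
    hM.sep_mem (P := fun v : Fin 2 → ZFSet => v 1 ≠ v 0) (IsDefinable.eq _ _).not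
      (a := ![m]) (by simp [hM.mem_of_mem_omega hm]) hM.infinity
  unfold nameRow
  refine hM.image_mem (isDefinable_isNameEdge hM 0 1 2 3) (a := ![oneCond, m])
    (by simp [Fin.forall_fin_two, hone, hM.mem_of_mem_omega hm]) hsep
    (fun n hn => nameEdge_mem hM hm (ZFSet.mem_sep.1 hn).1) fun n hn u _ => ?_
  exact isNameEdge_iff hM hm (ZFSet.mem_sep.1 hn).1

lemma nameE_mem (hM : IsCTM M) : nameE ∈ M := by
  have hone := oneCond_mem hM
  have hdef : IsDefinable M fun v : Fin 4 → ZFSet =>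
      ∀ u ∈ M, u ∈ v 3 ↔ ∃ n ∈ v 0, n ≠ v 2 ∧ IsNameEdge M (v 1) (v 2) n u :=
    .forall_mem <| (IsDefinable.mem _ _).iff <| .exists_mem_var hM _ <|
      (IsDefinable.eq _ _).not.and (isDefinable_isNameEdge hM _ _ _ _)
  refine hM.union _ (hM.image_mem hdef (a := ![ZFSet.omega, oneCond])
    (by simp [Fin.forall_fin_two, hone, hM.infinity]) hM.infinity
    (fun m hm => nameRow_mem hM hm) fun m hm z hz => ?_)
  show (∀ u ∈ M, u ∈ z ↔ ∃ n ∈ ZFSet.omega, n ≠ m ∧ IsNameEdge M oneCond m n u) ↔ _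
  constructor
  · intro h
    ext u
    rw [mem_nameRow]
    constructor
    · intro hu
      obtain ⟨n, hn, hnm, hu'⟩ := (h u (hM.mem_of_mem hz hu)).1 hu
      exact ⟨n, hn, hnm, (isNameEdge_iff hM hm hn).1 hu'⟩
    · rintro ⟨n, hn, hnm, rfl⟩
      exact (h _ (nameEdge_mem hM hm hn)).2 ⟨n, hn, hnm, (isNameEdge_iff hM hm hn).2 rfl⟩
  · rintro rfl u _
    rw [mem_nameRow]
    exact exists_congr fun n => and_congr_right fun hn => and_congr_right fun _ =>
      (isNameEdge_iff hM hm hn).symm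

lemma isName_nameE : IsName (FriedmanP M) nameE := by
  refine ⟨_, fun z hz => ?_, fun τ p hτp => ?_⟩
  · obtain ⟨m, hm, n, hn, hnm, rfl⟩ := mem_nameE.1 hz
    exact ⟨_, _, pCond_mem_friedmanP hm hn hnm.symm, rfl⟩
  · obtain ⟨m, -, n, -, -, h⟩ := mem_nameE.1 hτp
    rw [(ZFSet.pair_injective h).1]
    exact isName_check _

lemma mem_val_nameE {G : Set ZFSet} (hone : oneCond ∈ G) {z : ZFSet} :
    z ∈ val G nameE ↔
      ∃ m ∈ ZFSet.omega, ∃ n ∈ ZFSet.omega, n ≠ m ∧ pCond m n ∈ G ∧ z = ZFSet.pair m n := by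
  rw [mem_val]
  constructor
  · rintro ⟨τ, ⟨p, hp, hτp⟩, rfl⟩
    obtain ⟨m, hm, n, hn, hnm, h⟩ := mem_nameE.1 hτp
    obtain ⟨rfl, rfl⟩ := ZFSet.pair_injective h
    exact ⟨m, hm, n, hn, hnm, hp, val_check hone _⟩
  · rintro ⟨m, hm, n, hn, hnm, hp, rfl⟩
    exact ⟨_, ⟨_, hp, mem_nameE.2 ⟨m, hm, n, hn, hnm, rfl⟩⟩, (val_check hone _).symm⟩

lemma pair_mem_val_nameE {G : Set ZFSet} (hone : oneCond ∈ G) {m n : ZFSet}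
    (hm : m ∈ ZFSet.omega) (hn : n ∈ ZFSet.omega) :
    ZFSet.pair m n ∈ val G nameE ↔ m ≠ n ∧ pCond m n ∈ G := by
  rw [mem_val_nameE hone]
  constructor
  · rintro ⟨m', -, n', -, hnm, hp, h⟩
    obtain ⟨rfl, rfl⟩ := ZFSet.pair_injective h
    exact ⟨hnm.symm, hp⟩
  · rintro ⟨hmn, hp⟩
    exact ⟨m, hm, n, hn, hmn.symm, hp, rfl⟩

/-- Let `M` be a countable transitive model of `ZF⁻` and `G` an
`𝔽^M`-generic filter over `M` (i.e. generic with respect to all dense sets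
definable over `M`). Then there is a binary relation `E` on `ω` with
`E ∈ M[G]` such that `(ω, E)` and `(M, ∈)` are isomorphic in `V`. -/
theorem statement9 (M : ZFSet) (hM : IsCTM M) (G : Set ZFSet)
    (hG : IsGenericRaw M (DefClasses M) (FriedmanP M) FriedmanLe G) :
    ∃ E : ZFSet, E ∈ MG M (FriedmanP M) G ∧
      (∀ x ∈ E, ∃ m ∈ ZFSet.omega, ∃ n ∈ ZFSet.omega, x = ZFSet.pair m n) ∧
      ∃ h : ZFSet → ZFSet,
        (∀ n ∈ ZFSet.omega, h n ∈ M) ∧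
        (∀ m ∈ ZFSet.omega, ∀ n ∈ ZFSet.omega, h m = h n → m = n) ∧
        (∀ x ∈ M, ∃ n ∈ ZFSet.omega, h n = x) ∧
        (∀ m ∈ ZFSet.omega, ∀ n ∈ ZFSet.omega, (ZFSet.pair m n ∈ E ↔ h m ∈ h n)) := by
  have hone := hG.oneCond_mem hM
  refine ⟨val G nameE, ⟨nameE, nameE_mem hM, isName_nameE, rfl⟩, fun x hx => ?_, genEnum G,
    fun n hn => hG.genEnum_mem hM hn, fun m hm n hn => hG.genEnum_injOn hM hm hn,
    fun x hx => hG.genEnum_surj hM hx, fun m hm n hn => ?_⟩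
  · obtain ⟨m, hm, n, hn, -, -, rfl⟩ := (mem_val_nameE hone).1 hx
    exact ⟨m, hm, n, hn, rfl⟩
  · rw [pair_mem_val_nameE hone hm hn]
    by_cases hmn : m = n
    · subst hmn
      simp [ZFSet.mem_irrefl]
    · rw [hG.pCond_mem_iff hM hm hn hmn, and_iff_right hmn]
end CF
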